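/- arXiv:1510.02951 — 7 statements merged into one kernel-verified Lean document; each statement's English description precedes it below -/
import Mathlib

section
/- For every integer r ≥ 0 and every integer k ≥ 2, the treewidth of the primal graph of the CNF F_{r,k} is at most 2k − 1. -/
/-- The complete binary tree of height `r`, with nodes heap-indexed by
`Fin (2^(r+1) - 1)`: the children of node `i` are `2*i+1` and `2*i+2`. -/
def treeGraph (r : ℕ) : SimpleGraph (Fin (2 ^ (r + 1) - 1)) :=
  SimpleGraph.fromRel (fun i j => (j : ℕ) = 2 * (i : ℕ) + 1 ∨ (j : ℕ) = 2 * (i : ℕ) + 2)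

/-- The graph `CT_{r,k}`: each node of the complete binary tree of height `r`
is replaced by a clique of `k` vertices, and for each tree edge all vertices of
the two corresponding cliques are mutually adjacent. -/
def CT (r k : ℕ) : SimpleGraph (Fin (2 ^ (r + 1) - 1) × Fin k) :=
  SimpleGraph.fromRel (fun a b => a.1 = b.1 ∨ (treeGraph r).Adj a.1 b.1)

/-- The variables of the CNF `CNF(G)`: one variable `X_u` per vertex `u`
(left summand) and one variable `X_{u,v}` per edge `{u,v}` (right summand). -/
def CNFVar {V : Type} (G : SimpleGraph V) : Type := V ⊕ G.edgeSet

/-- The Boolean function represented by `CNF(G)`: an assignment `a` is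
satisfying iff for every edge `{u,v}` of `G` the clause
`(X_u ∨ X_{u,v} ∨ X_v)` is satisfied. -/
def cnfSat {V : Type} (G : SimpleGraph V) (a : CNFVar G → Bool) : Prop :=
  ∀ (e : G.edgeSet) (u v : V), e.1 = s(u, v) →
    a (Sum.inl u) = true ∨ a (Sum.inr e) = true ∨ a (Sum.inl v) = true

/-- The variable `x` occurs in the clause corresponding to the edge `e`. -/
def inClause {V : Type} (G : SimpleGraph V) (e : G.edgeSet) (x : CNFVar G) : Prop :=
  x = Sum.inr e ∨ ∃ u : V, x = Sum.inl u ∧ u ∈ e.1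

/-- The primal graph of `CNF(G)`: vertices are the variables, two distinct
variables being adjacent iff they occur together in some clause. -/
def primalGraph {V : Type} (G : SimpleGraph V) : SimpleGraph (CNFVar G) :=
  SimpleGraph.fromRel (fun x y => ∃ e, inClause G e x ∧ inClause G e y)

/-- `TreewidthLE G w` holds iff `G` admits a tree decomposition of width at
most `w`, i.e. a tree `T` with bags satisfying the union, containment and
connectedness conditions, all bags having at most `w + 1` vertices. -/
def TreewidthLE {V : Type} (G : SimpleGraph V) (w : ℕ) : Prop :=
  ∃ (ι : Type) (T : SimpleGraph ι) (bag : ι → Finset V),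
    T.IsTree ∧
    (∀ v : V, ∃ t, v ∈ bag t) ∧
    (∀ u v : V, G.Adj u v → ∃ t, u ∈ bag t ∧ v ∈ bag t) ∧
    (∀ v : V, (T.induce {t | v ∈ bag t}).Connected) ∧
    (∀ t, (bag t).card ≤ w + 1)

/-!
The heap-indexed binary tree is the graph of its parent map, and a parent map whose rank drops
at every non-root vertex gives a tree (a vertex of maximal rank on a cycle would have two
neighbours of lower rank, but only one parent); with bags `{t, parent t}` it has treewidth `1`.
Replacing every vertex of a tree decomposition of `T_r` by its clique gives one of `CT_{r,k}`
with bags of size `2k`. Finally, a tree decomposition of `G` yields one of the primal graph of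
`CNF(G)` of the same width `w ≥ 2`: keep the bags (now holding the variables `X_u`) and, for
each edge `e = {u, v}`, hang a leaf bag `{X_u, X_e, X_v}` off a bag containing `u` and `v`.
-/

open SimpleGraph

namespace SimpleGraph

variable {V : Type*} {G : SimpleGraph V}

theorem Walk.IsCycle.exists_ne_adj_of_mem_support {u v : V} {c : G.Walk u u} (hc : c.IsCycle)
    (hv : v ∈ c.support) :
    ∃ x ∈ c.support, ∃ y ∈ c.support, x ≠ y ∧ G.Adj x v ∧ G.Adj y v := by
  classical
  have hc' : (c.rotate v hv).IsCycle := hc.rotate hv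
  refine ⟨_, (c.mem_support_rotate_iff v hv).1 ((c.rotate v hv).getVert_mem_support _),
    _, (c.mem_support_rotate_iff v hv).1 ((c.rotate v hv).getVert_mem_support _),
    hc'.snd_ne_penultimate, (Walk.adj_snd hc'.not_nil).symm, Walk.adj_penultimate hc'.not_nil⟩

theorem isAcyclic_of_lowerNeighbor_unique {α : Type*} [LinearOrder α] (h : V → α)
    (hlow : ∀ x y z, G.Adj x z → G.Adj y z → h x ≤ h z → h y ≤ h z → x = y) :
    G.IsAcyclic := by
  classical
  intro u c hc
  obtain ⟨v, hv, hmax⟩ := c.support.toFinset.exists_max_image h ⟨u, by simp⟩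
  rw [List.mem_toFinset] at hv
  obtain ⟨x, hx, y, hy, hxy, hxv, hyv⟩ := hc.exists_ne_adj_of_mem_support hv
  exact hxy (hlow x y v hxv hyv (hmax x (by simpa using hx)) (hmax y (by simpa using hy)))

theorem isAcyclic_of_embedding_of_subsingleton_neighborSet {W : Type*} {H : SimpleGraph W}
    (φ : H ↪g G) (hH : H.IsAcyclic)
    (hleaf : ∀ v ∉ Set.range φ, (G.neighborSet v).Subsingleton) : G.IsAcyclic := by
  intro u c hc
  by_cases hsupp : ∀ v ∈ c.support, v ∈ Set.range φ
  · refine (φ.isoInduceRange.isAcyclic_iff.1 hH) (c.induce _ hsupp) ?_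
    rw [← Walk.isCycle_map_iff_of_injective (f := (Embedding.induce _).toHom)
      Subtype.coe_injective, Walk.map_induce]
    exact hc
  · obtain ⟨v, hv, hvφ⟩ : ∃ v ∈ c.support, v ∉ Set.range φ := by simpa using hsupp
    obtain ⟨x, -, y, -, hxy, hxv, hyv⟩ := hc.exists_ne_adj_of_mem_support hv
    exact hxy (hleaf v hvφ hxv.symm hyv.symm)

end SimpleGraph

section ParentGraph

variable {ι : Type} {P : ι → ι}

def parentGraph (P : ι → ι) : SimpleGraph ι :=
  SimpleGraph.fromRel fun x y => x = P y

theorem parentGraph_adj {x y : ι} :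
    (parentGraph P).Adj x y ↔ x ≠ y ∧ (x = P y ∨ y = P x) :=
  SimpleGraph.fromRel_adj _ x y

variable (h : ι → ℕ)

theorem parentGraph_isAcyclic (hP : ∀ t, P t ≠ t → h (P t) < h t) :
    (parentGraph P).IsAcyclic := by
  have lower : ∀ x z, (parentGraph P).Adj x z → h x ≤ h z → x = P z := by
    intro x z hxz hle
    rcases parentGraph_adj.1 hxz with ⟨hne, hx | hz⟩
    · exact hx
    · have hlt : h z < h x := hz ▸ hP x (hz ▸ hne.symm)
      omega
  exact isAcyclic_of_lowerNeighbor_unique h fun x y z hxz hyz hx hy =>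
    (lower x z hxz hx).trans (lower y z hyz hy).symm

theorem parentGraph_connected (hP : ∀ t, P t ≠ t → h (P t) < h t) (root : ι)
    (hroot : ∀ t, P t = t → t = root) :
    (parentGraph P).Connected := by
  have reach : ∀ t, (parentGraph P).Reachable t root := by
    intro t
    induction t using (measure h).wf.induction with
    | _ t ih =>
      by_cases ht : P t = t
      · rw [hroot t ht]
      · exact (Adj.reachable (parentGraph_adj.2 ⟨Ne.symm ht, Or.inr rfl⟩)).trans
          (ih (P t) (hP t ht))
  exact (connected_iff_exists_forall_reachable _).2 ⟨root, fun t => (reach t).symm⟩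

theorem treewidthLE_one_of_isTree_parentGraph [DecidableEq ι] (hT : (parentGraph P).IsTree) :
    TreewidthLE (parentGraph P) 1 := by
  refine ⟨ι, parentGraph P, fun t => {t, P t}, hT, fun v => ⟨v, by simp⟩, ?_, ?_, ?_⟩
  · intro u v huv
    rcases (parentGraph_adj.1 huv).2 with rfl | rfl
    · exact ⟨v, by simp⟩
    · exact ⟨u, by simp⟩
  · intro v
    refine (connected_iff_exists_forall_reachable _).2 ⟨⟨v, by simp⟩, fun ⟨t, ht⟩ => ?_⟩
    by_cases htv : t = v
    · subst htv; rfl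
    · have hvt : v = P t := by simpa [Ne.symm htv] using ht
      exact Adj.reachable (parentGraph_adj.2 ⟨Ne.symm htv, Or.inl hvt⟩)
  · intro t
    exact Finset.card_le_two

end ParentGraph

-- `(0 - 1) / 2 = 0`: the root is its own parent.
def heapParent {n : ℕ} (i : Fin n) : Fin n :=
  ⟨(i - 1) / 2, by omega⟩

theorem treeGraph_eq_parentGraph (r : ℕ) : treeGraph r = parentGraph heapParent := by
  ext i j
  simp only [treeGraph, parentGraph, SimpleGraph.fromRel_adj, heapParent, ne_eq, Fin.ext_iff]
  omega

theorem treewidthLE_treeGraph (r : ℕ) : TreewidthLE (treeGraph r) 1 := by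
  have hpos : 0 < 2 ^ (r + 1) - 1 := by
    have := Nat.one_lt_two_pow (n := r + 1) (by omega)
    omega
  have hP : ∀ i : Fin (2 ^ (r + 1) - 1), heapParent i ≠ i → (heapParent i : ℕ) < i := by
    intro i hi
    have : (i - 1) / 2 ≠ (i : ℕ) := fun h => hi (Fin.ext h)
    simp only [heapParent]
    omega
  have hroot : ∀ i : Fin (2 ^ (r + 1) - 1), heapParent i = i → i = ⟨0, hpos⟩ := by
    intro i hi
    have : (i - 1) / 2 = (i : ℕ) := congrArg Fin.val hi
    exact Fin.ext (by simp only; omega)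
  rw [treeGraph_eq_parentGraph]
  exact treewidthLE_one_of_isTree_parentGraph
    ⟨parentGraph_connected Fin.val hP _ hroot, parentGraph_isAcyclic Fin.val hP⟩

def cliqueBlowup {V : Type} (H : SimpleGraph V) (α : Type) : SimpleGraph (V × α) :=
  SimpleGraph.fromRel fun a b => a.1 = b.1 ∨ H.Adj a.1 b.1

theorem CT_eq_cliqueBlowup (r k : ℕ) : CT r k = cliqueBlowup (treeGraph r) (Fin k) :=
  rfl

theorem TreewidthLE.cliqueBlowup {V : Type} {H : SimpleGraph V} {w : ℕ} (hH : TreewidthLE H w)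
    (α : Type) [Fintype α] :
    TreewidthLE (cliqueBlowup H α) ((w + 1) * Fintype.card α - 1) := by
  classical
  obtain ⟨ι, T, bag, hT, hunion, hedge, hconn, hcard⟩ := hH
  refine ⟨ι, T, fun t => bag t ×ˢ Finset.univ, hT, ?_, ?_, ?_, ?_⟩
  · rintro ⟨v, a⟩
    obtain ⟨t, ht⟩ := hunion v
    exact ⟨t, by simpa using ht⟩
  · rintro ⟨u, a⟩ ⟨v, b⟩ huv
    have hcov : u = v ∨ H.Adj u v := by
      rcases (SimpleGraph.fromRel_adj _ _ _).1 huv with ⟨-, h | h⟩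
      · exact h
      · exact h.imp Eq.symm fun h => h.symm
    rcases hcov with rfl | huv
    · obtain ⟨t, ht⟩ := hunion u
      exact ⟨t, by simpa using ht, by simpa using ht⟩
    · obtain ⟨t, hu, hv⟩ := hedge u v huv
      exact ⟨t, by simpa using hu, by simpa using hv⟩
  · rintro ⟨v, a⟩
    have hbags : {t | (v, a) ∈ bag t ×ˢ Finset.univ} = {t | v ∈ bag t} := by
      ext t
      simp
    show (T.induce {t | (v, a) ∈ bag t ×ˢ Finset.univ}).Connected
    rw [hbags]
    exact hconn v
  · intro t
    have := Nat.mul_le_mul_right (Fintype.card α) (hcard t)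
    rw [Finset.card_product, Finset.card_univ]
    omega

section AttachLeaves

variable {ι β : Type} (T : SimpleGraph ι) (f : β → ι)

def attachLeaves : SimpleGraph (ι ⊕ β) where
  Adj
    | .inl s, .inl t => T.Adj s t
    | .inl s, .inr b => f b = s
    | .inr b, .inl s => f b = s
    | .inr _, .inr _ => False
  symm.symm
    | .inl _, .inl _ => T.adj_symm
    | .inl _, .inr _ | .inr _, .inl _ | .inr _, .inr _ => id
  loopless.irrefl
    | .inl t => T.loopless.irrefl t
    | .inr _ => id

def attachLeavesInl : T ↪g attachLeaves T f where
  toEmbedding := Function.Embedding.inl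
  map_rel_iff' := Iff.rfl

variable {T f}

theorem attachLeaves_isTree (hT : T.IsTree) : (attachLeaves T f).IsTree := by
  refine ⟨(connected_iff_exists_forall_reachable _).2 ?_, ?_⟩
  · obtain ⟨t₀⟩ := hT.connected.nonempty
    refine ⟨.inl t₀, ?_⟩
    rintro (t | b)
    · exact (hT.connected t₀ t).map (attachLeavesInl T f).toHom
    · exact ((hT.connected t₀ (f b)).map (attachLeavesInl T f).toHom).trans
        (Adj.reachable (show (attachLeaves T f).Adj (.inl (f b)) (.inr b) from rfl))
  · refine isAcyclic_of_embedding_of_subsingleton_neighborSet (attachLeavesInl T f)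
      hT.isAcyclic ?_
    rintro (t | b) hb
    · exact absurd ⟨t, rfl⟩ hb
    · rintro (x | c) hx (y | d) hy
      · exact congrArg Sum.inl (Eq.trans (Eq.symm hx) hy)
      all_goals first | exact False.elim hx | exact False.elim hy

theorem attachLeaves_induce_connected {S : Set ι} (hS : (T.induce S).Connected)
    {S' : Set (ι ⊕ β)} (hinl : ∀ t, .inl t ∈ S' ↔ t ∈ S) (hinr : ∀ b, .inr b ∈ S' → f b ∈ S) :
    ((attachLeaves T f).induce S').Connected := by
  obtain ⟨⟨t₀, ht₀⟩⟩ := hS.nonempty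
  let φ : T.induce S →g (attachLeaves T f).induce S' :=
    { toFun := fun t => ⟨.inl t.1, (hinl _).2 t.2⟩
      map_rel' := fun h => h }
  refine (connected_iff_exists_forall_reachable _).2 ⟨φ ⟨t₀, ht₀⟩, ?_⟩
  rintro ⟨t | b, hx⟩
  · exact (hS.preconnected ⟨t₀, ht₀⟩ ⟨t, (hinl t).1 hx⟩).map φ
  · exact ((hS.preconnected ⟨t₀, ht₀⟩ ⟨f b, hinr b hx⟩).map φ).trans
      (Adj.reachable (show (attachLeaves T f).Adj (.inl (f b)) (.inr b) from rfl))

end AttachLeaves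

section PrimalGraph

variable {V : Type} [DecidableEq V] (G : SimpleGraph V) {ι : Type} (bag : ι → Finset V)

def primalBag : ι ⊕ G.edgeSet → Finset (V ⊕ G.edgeSet)
  | .inl t => (bag t).disjSum ∅
  | .inr e => (e : Sym2 V).toFinset.disjSum {e}

variable {G bag}

theorem card_primalBag_inl (t : ι) : (primalBag G bag (.inl t)).card = (bag t).card := by
  simp [primalBag]

theorem mem_primalBag_inr {x : V ⊕ G.edgeSet} {e : G.edgeSet} :
    x ∈ primalBag G bag (.inr e) ↔ inClause G e x := by
  rcases x with u | e'
  · simp only [primalBag, Finset.inl_mem_disjSum, Sym2.mem_toFinset, inClause, reduceCtorEq,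
      false_or]
    exact ⟨fun h => ⟨u, rfl, h⟩, fun ⟨u', hu', hu⟩ => Sum.inl_injective hu' ▸ hu⟩
  · simp only [primalBag, Finset.inr_mem_disjSum, Finset.mem_singleton, inClause]
    exact ⟨fun h => .inl (congrArg Sum.inr h),
      fun h => h.elim (fun h => Sum.inr_injective h) fun ⟨_, h, _⟩ => absurd h Sum.inr_ne_inl⟩

theorem card_primalBag_inr_le (e : G.edgeSet) : (primalBag G bag (.inr e)).card ≤ 3 := by
  have := (e : Sym2 V).card_toFinset
  simp only [primalBag, Finset.card_disjSum, Finset.card_singleton]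
  split_ifs at this <;> omega

end PrimalGraph

theorem TreewidthLE.primalGraph {V : Type} {G : SimpleGraph V} {w : ℕ} (hG : TreewidthLE G w)
    (hw : 2 ≤ w) : TreewidthLE (primalGraph G) w := by
  classical
  obtain ⟨ι, T, bag, hT, hunion, hedge, hconn, hcard⟩ := hG
  have hhost : ∀ e : G.edgeSet, ∃ t, ∀ u ∈ (e : Sym2 V), u ∈ bag t := by
    rintro ⟨e, he⟩
    induction e using Sym2.ind with
    | _ u v =>
      obtain ⟨t, hu, hv⟩ := hedge u v he
      exact ⟨t, by simp [hu, hv]⟩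
  choose host hhost using hhost
  refine ⟨ι ⊕ G.edgeSet, attachLeaves T host, primalBag G bag, attachLeaves_isTree hT,
    ?_, ?_, ?_, ?_⟩
  · rintro (u | e)
    · obtain ⟨t, ht⟩ := hunion u
      exact ⟨.inl t, Finset.inl_mem_disjSum.2 ht⟩
    · exact ⟨.inr e, mem_primalBag_inr.2 (.inl rfl)⟩
  · intro x y hxy
    rcases (SimpleGraph.fromRel_adj _ _ _).1 hxy with ⟨-, ⟨e, hx, hy⟩ | ⟨e, hy, hx⟩⟩ <;>
      exact ⟨.inr e, mem_primalBag_inr.2 hx, mem_primalBag_inr.2 hy⟩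
  · rintro (u | e)
    · refine attachLeaves_induce_connected (hconn u) (fun t => Finset.inl_mem_disjSum) ?_
      intro e he
      obtain h | ⟨u', hu', hu⟩ := mem_primalBag_inr.1 he
      · exact absurd h Sum.inl_ne_inr
      · exact hhost e u (Sum.inl_injective hu' ▸ hu)
    · have hbags : {t | .inr e ∈ primalBag G bag t} = {.inr e} := by
        ext (t | e')
        · simp [primalBag]
        · simp [primalBag, eq_comm]
      show ((attachLeaves T host).induce {t | .inr e ∈ primalBag G bag t}).Connected
      rw [hbags, induce_singleton_eq_top]
      exact connected_top
  · rintro (t | e)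
    · exact (card_primalBag_inl t).trans_le (hcard t)
    · exact (card_primalBag_inr_le e).trans (by omega)

/-- For every `r ≥ 0` and `k ≥ 2`, the treewidth of the primal graph of the CNF
`F_{r,k} = CNF(CT_{r,k})` is at most `2k - 1`. -/
theorem stmt1 (r k : ℕ) (hk : 2 ≤ k) :
    TreewidthLE (primalGraph (CT r k)) (2 * k - 1) := by
  have hCT := (treewidthLE_treeGraph r).cliqueBlowup (Fin k)
  rw [← CT_eq_cliqueBlowup, Fintype.card_fin, one_add_one_eq_two] at hCT
  exact hCT.primalGraph (by omega)
end

section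
/- Let G be a finite graph of matching width at least t, let c be a positive integer, and let Z be a c-NSOBDD computing the function represented by CNF(G). Then |Z| ≥ 2^{t/(2c−1)}. -/
/-- A nondeterministic branching program over the variable set `Var`:
a DAG (nodes are `Fin n`, every edge goes from a smaller to a larger node)
with a designated root and leaf, where some edges are labeled by literals
(`(x, true)` is the positive literal of `x`, `(x, false)` the negative one).
Its size is the number `n` of nodes. -/
structure NBP (Var : Type) where
  n : ℕ
  E : Type
  src : E → Fin n
  tgt : E → Fin n
  acyc : ∀ e, src e < tgt e
  root : Fin n
  leaf : Fin n
  label : E → Option (Var × Bool)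

namespace NBP

variable {Var : Type} (Z : NBP Var)

/-- A root-leaf path, given as the list of its edges. -/
def IsRootLeafPath (p : List Z.E) : Prop :=
  p.Chain' (fun e f => Z.tgt e = Z.src f) ∧
  p.head?.map Z.src = some Z.root ∧
  p.getLast?.map Z.tgt = some Z.leaf

/-- `A(P)`: the set of literals labeling the edges of the path `p`. -/
def lits (p : List Z.E) : Set (Var × Bool) :=
  {l | ∃ e ∈ p, Z.label e = some l}

/-- A path is consistent if no variable occurs on it both positively and
negatively. A consistent root-leaf path is a computational path. -/
def Consistent (p : List Z.E) : Prop :=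
  ∀ x : Var, ¬ ((x, true) ∈ Z.lits p ∧ (x, false) ∈ Z.lits p)

/-- `Z` computes the Boolean function `F`: an assignment satisfies `F` iff
some computational path of `Z` is consistent with it. -/
def Computes (F : (Var → Bool) → Prop) : Prop :=
  ∀ a : Var → Bool,
    F a ↔ ∃ p : List Z.E, Z.IsRootLeafPath p ∧ Z.Consistent p ∧
      ∀ l ∈ Z.lits p, a l.1 = l.2

/-- `Z` is a nondeterministic semantic `c`-OBDD: there is an ordering `σ` of
the variables (a permutation, given by an injection into `ℕ`) such that every
computational path decomposes into `c` consecutive pieces, on each of which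
each variable occurs at most once and the labeled variables appear in strictly
increasing `σ`-order. -/
def IsNSOBDD (c : ℕ) : Prop :=
  ∃ σ : Var → ℕ, Function.Injective σ ∧
    ∀ p : List Z.E, Z.IsRootLeafPath p → Z.Consistent p →
      ∃ ps : List (List Z.E), ps.length = c ∧ ps.flatten = p ∧
        ∀ q ∈ ps, ((q.filterMap Z.label).map (fun l => σ l.1)).Pairwise (· < ·)

end NBP

/-- `M` is a matching of `G` all of whose edges cross the cut `(A, Aᶜ)`:
every element of `M` is an edge of `G` with one end in `A` and the other
outside `A`, and no two distinct elements of `M` share a vertex. -/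
def IsCutMatching {V : Type} (G : SimpleGraph V) (A : Set V) (M : Finset (Sym2 V)) : Prop :=
  (∀ e ∈ M, e ∈ G.edgeSet) ∧
  (∀ e ∈ M, ∃ u v : V, e = s(u, v) ∧ u ∈ A ∧ v ∉ A) ∧
  (∀ e₁ ∈ M, ∀ e₂ ∈ M, e₁ ≠ e₂ → ∀ x : V, x ∈ e₁ → x ∉ e₂)

/-- The matching width of `G` is at most `w`: some ordering of the vertices
is such that, for every prefix, every matching consisting of edges between
the prefix and the rest has size at most `w`. -/
def mwLE {V : Type} [Fintype V] (G : SimpleGraph V) (w : ℕ) : Prop :=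
  ∃ σ : Fin (Fintype.card V) ≃ V,
    ∀ (i : ℕ) (M : Finset (Sym2 V)),
      IsCutMatching G {v : V | ((σ.symm v : Fin (Fintype.card V)) : ℕ) < i} M →
        M.card ≤ w

/-- The matching width of a finite graph. -/
noncomputable def mw {V : Type} [Fintype V] (G : SimpleGraph V) : ℕ :=
  sInf {w | mwLE G w}

theorem List.le_of_mem_dropWhile_all {α β : Type*} [LinearOrder β] {f : α → Option β} {θ : β}
    {l : List α} (hl : (l.filterMap f).Pairwise (· ≤ ·)) {x : α}
    (hx : x ∈ l.dropWhile fun y => (f y).all (· < θ)) {b : β} (hb : f x = some b) : θ ≤ b := by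
  induction l with
  | nil => simp at hx
  | cons y l ih =>
    rw [List.dropWhile_cons] at hx
    split_ifs at hx with hy
    · exact ih (hl.sublist ((List.sublist_cons_self y l).filterMap f)) hx
    · obtain ⟨b₀, hyb₀, hθb₀⟩ : ∃ b₀, f y = some b₀ ∧ θ ≤ b₀ := by
        cases hfy : f y <;> simp_all
      rw [List.filterMap_cons_some hyb₀, List.pairwise_cons] at hl
      rcases List.mem_cons.1 hx with rfl | hx
      · exact hθb₀.trans (Option.some_injective _ (hyb₀.symm.trans hb)).le
      · exact hθb₀.trans (hl.1 b (List.mem_filterMap.2 ⟨x, hx, hb⟩))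

theorem Fin.ext_of_interior {α : Type*} {m : ℕ} {x y : Fin (m + 1) → α} (h0 : x 0 = y 0)
    (hlast : x (Fin.last m) = y (Fin.last m))
    (h : ∀ j : Fin (m - 1), x ⟨j + 1, by omega⟩ = y ⟨j + 1, by omega⟩) : x = y := by
  funext ⟨k, hk⟩
  rcases Nat.eq_zero_or_pos k with rfl | hk0
  · exact h0
  rcases eq_or_lt_of_le (Nat.lt_succ_iff.1 hk) with rfl | hkm
  · exact hlast
  obtain ⟨j, rfl⟩ : ∃ j, k = j + 1 := ⟨k - 1, by omega⟩
  exact h ⟨j, by omega⟩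

namespace NBP

variable {Var : Type} {Z : NBP Var}

variable (Z) in
inductive IsPath : Fin Z.n → List Z.E → Fin Z.n → Prop
  | nil (a : Fin Z.n) : IsPath a [] a
  | cons {e : Z.E} {p : List Z.E} {b : Fin Z.n} :
      IsPath (Z.tgt e) p b → IsPath (Z.src e) (e :: p) b

theorem isPath_nil_iff {a b : Fin Z.n} : Z.IsPath a [] b ↔ a = b :=
  ⟨fun | .nil _ => rfl, fun h => h ▸ .nil a⟩

theorem isPath_cons_iff {a b : Fin Z.n} {e : Z.E} {p : List Z.E} :
    Z.IsPath a (e :: p) b ↔ a = Z.src e ∧ Z.IsPath (Z.tgt e) p b :=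
  ⟨fun | .cons h => ⟨rfl, h⟩, fun ⟨ha, h⟩ => ha ▸ .cons h⟩

theorem isPath_append_iff {a b : Fin Z.n} {p q : List Z.E} :
    Z.IsPath a (p ++ q) b ↔ ∃ m, Z.IsPath a p m ∧ Z.IsPath m q b := by
  induction p generalizing a with
  | nil => simp [isPath_nil_iff]
  | cons e p ih => simp [isPath_cons_iff, ih, and_assoc]

theorem IsPath.le {a b : Fin Z.n} {p : List Z.E} (h : Z.IsPath a p b) : a ≤ b := by
  induction h with
  | nil => exact le_rfl
  | cons _ ih => exact (Z.acyc _).le.trans ih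

theorem isPath_src_cons_iff {e : Z.E} {p : List Z.E} {b : Fin Z.n} :
    Z.IsPath (Z.src e) (e :: p) b ↔
      (e :: p).IsChain (fun e f => Z.tgt e = Z.src f) ∧ Z.tgt ((e :: p).getLast (by simp)) = b := by
  induction p generalizing e with
  | nil => simp [isPath_cons_iff, isPath_nil_iff]
  | cons f p ih =>
    rw [List.getLast_cons_cons, List.isChain_cons_cons, and_assoc, ← ih]
    simp only [isPath_cons_iff, true_and]

theorem isRootLeafPath_iff {p : List Z.E} :
    Z.IsRootLeafPath p ↔ p ≠ [] ∧ Z.IsPath Z.root p Z.leaf := by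
  cases p with
  | nil => simp [IsRootLeafPath]
  | cons e p =>
    simp only [IsRootLeafPath, List.head?_cons, Option.map_some, Option.some.injEq,
      List.getLast?_eq_some_getLast (List.cons_ne_nil e p), ne_eq, reduceCtorEq,
      not_false_eq_true, true_and]
    constructor
    · rintro ⟨hchain, hroot, hleaf⟩
      exact hroot ▸ isPath_src_cons_iff.2 ⟨hchain, hleaf⟩
    · intro h
      obtain ⟨hroot, -⟩ := isPath_cons_iff.1 h
      rw [hroot] at h ⊢
      exact ⟨(isPath_src_cons_iff.1 h).1, rfl, (isPath_src_cons_iff.1 h).2⟩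

theorem isPath_flatten_ofFn_iff {m : ℕ} {q : Fin m → List Z.E} {a b : Fin Z.n} :
    Z.IsPath a (List.ofFn q).flatten b ↔ ∃ y : Fin (m + 1) → Fin Z.n,
      y 0 = a ∧ y (Fin.last m) = b ∧ ∀ i, Z.IsPath (y i.castSucc) (q i) (y i.succ) := by
  induction m generalizing a with
  | zero =>
    simp only [List.ofFn_zero, List.flatten_nil, isPath_nil_iff, IsEmpty.forall_iff, and_true]
    exact ⟨fun h => ⟨fun _ => a, rfl, h⟩, fun ⟨y, hy0, hy⟩ => hy0 ▸ hy⟩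
  | succ m ih =>
    simp only [List.ofFn_succ, List.flatten_cons, isPath_append_iff, ih]
    constructor
    · rintro ⟨c, hc, y, rfl, rfl, hy⟩
      refine ⟨Fin.cons a y, rfl, by rw [← Fin.succ_last, Fin.cons_succ], fun i => ?_⟩
      cases i using Fin.cases with
      | zero => simpa using hc
      | succ i => simpa [← Fin.succ_castSucc] using hy i
    · rintro ⟨y, rfl, rfl, hy⟩
      refine ⟨y 1, hy 0, y ∘ Fin.succ, rfl, by rw [Function.comp_apply, Fin.succ_last], fun i => ?_⟩
      simpa only [Function.comp_apply, Fin.succ_castSucc] using hy i.succ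

theorem consistent_of_agrees {a : Var → Bool} {p : List Z.E} (h : ∀ l ∈ Z.lits p, a l.1 = l.2) :
    Z.Consistent p :=
  fun x ⟨hx, hx'⟩ => by simpa [h _ hx] using h _ hx'

theorem Computes.root_lt_leaf {F : (Var → Bool) → Prop} (hZ : Z.Computes F) {a : Var → Bool}
    (ha : F a) : Z.root < Z.leaf := by
  obtain ⟨p, hp, -⟩ := (hZ a).1 ha
  obtain ⟨hne, hpath⟩ := isRootLeafPath_iff.1 hp
  obtain ⟨e, p, rfl⟩ := List.exists_cons_of_ne_nil hne
  obtain ⟨hroot, hpath⟩ := isPath_cons_iff.1 hpath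
  rw [hroot]
  exact (Z.acyc e).trans_le hpath.le

variable (Z) in
def SortedBy (σ : Var → ℕ) (q : List Z.E) : Prop :=
  ((q.filterMap Z.label).map fun l => σ l.1).Pairwise (· < ·)

variable (Z) in
def IsNSOBDDOrder (c : ℕ) (σ : Var → ℕ) : Prop :=
  ∀ p : List Z.E, Z.IsRootLeafPath p → Z.Consistent p →
    ∃ q : Fin c → List Z.E, (List.ofFn q).flatten = p ∧ ∀ i, Z.SortedBy σ (q i)

theorem IsNSOBDD.exists_order {c : ℕ} (h : Z.IsNSOBDD c) :
    ∃ σ : Var → ℕ, Function.Injective σ ∧ Z.IsNSOBDDOrder c σ := by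
  obtain ⟨σ, hσ, h⟩ := h
  refine ⟨σ, hσ, fun p hp hcons => ?_⟩
  obtain ⟨ps, rfl, rfl, hsorted⟩ := h p hp hcons
  exact ⟨fun i => ps[(i : ℕ)], by rw [List.ofFn_getElem], fun i => hsorted _ (List.getElem_mem _)⟩

def mixAt (σ : Var → ℕ) (θ : ℕ) (a b : Var → Bool) (x : Var) : Bool :=
  if σ x < θ then a x else b x

variable (Z) in
def below (σ : Var → ℕ) (θ : ℕ) (e : Z.E) : Bool :=
  (Z.label e).all fun l => σ l.1 < θ

theorem lt_of_mem_takeWhile_below {σ : Var → ℕ} {θ : ℕ} {q : List Z.E} {e : Z.E}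
    (he : e ∈ q.takeWhile (Z.below σ θ)) {l : Var × Bool} (hl : Z.label e = some l) :
    σ l.1 < θ := by
  simpa [below, hl] using List.mem_takeWhile_imp he

theorem le_of_mem_dropWhile_below {σ : Var → ℕ} {θ : ℕ} {q : List Z.E} (hq : Z.SortedBy σ q)
    {e : Z.E} (he : e ∈ q.dropWhile (Z.below σ θ)) {l : Var × Bool} (hl : Z.label e = some l) :
    θ ≤ σ l.1 := by
  refine List.le_of_mem_dropWhile_all (f := fun e => (Z.label e).map fun l => σ l.1) ?_
    (by simp only [Option.all_map]; exact he) (by simp [hl])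
  rw [← List.map_filterMap]
  exact hq.imp le_of_lt

variable (Z) in
/-- A run of `Z` accepting `a`, cut into `c` sorted pieces at the nodes `y`, each piece cut once
more at the node `z i` where its labels first reach `θ` in the order `σ`. -/
def IsSplitRun {c : ℕ} (σ : Var → ℕ) (θ : ℕ) (a : Var → Bool) (q : Fin c → List Z.E)
    (y : Fin (c + 1) → Fin Z.n) (z : Fin c → Fin Z.n) : Prop :=
  (∀ l ∈ Z.lits (List.ofFn q).flatten, a l.1 = l.2) ∧ (∀ i, Z.SortedBy σ (q i)) ∧
    y 0 = Z.root ∧ y (Fin.last c) = Z.leaf ∧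
    ∀ i, Z.IsPath (y i.castSucc) ((q i).takeWhile (Z.below σ θ)) (z i) ∧
      Z.IsPath (z i) ((q i).dropWhile (Z.below σ θ)) (y i.succ)

theorem exists_isSplitRun {c : ℕ} {σ : Var → ℕ} (hσ : Z.IsNSOBDDOrder c σ)
    {F : (Var → Bool) → Prop} (hZ : Z.Computes F) {a : Var → Bool} (ha : F a) (θ : ℕ) :
    ∃ (q : Fin c → List Z.E) (y : Fin (c + 1) → Fin Z.n) (z : Fin c → Fin Z.n),
      Z.IsSplitRun σ θ a q y z := by
  obtain ⟨p, hp, hcons, hagree⟩ := (hZ a).1 ha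
  obtain ⟨q, rfl, hsorted⟩ := hσ p hp hcons
  obtain ⟨y, hy0, hylast, hy⟩ := isPath_flatten_ofFn_iff.1 (isRootLeafPath_iff.1 hp).2
  have hsplit : ∀ i, ∃ m, Z.IsPath (y i.castSucc) ((q i).takeWhile (Z.below σ θ)) m ∧
      Z.IsPath m ((q i).dropWhile (Z.below σ θ)) (y i.succ) := fun i =>
    isPath_append_iff.1 (List.takeWhile_append_dropWhile ▸ hy i)
  choose z hz using hsplit
  exact ⟨q, y, z, hagree, hsorted, hy0, hylast, hz⟩

/-- The accepting path takes, in each piece, the part below `θ` from the first run and the rest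
from the second. -/
theorem IsSplitRun.computes_mixAt {c : ℕ} {σ : Var → ℕ} {θ : ℕ} {a b : Var → Bool}
    {q q' : Fin c → List Z.E} {y : Fin (c + 1) → Fin Z.n} {z : Fin c → Fin Z.n}
    (h : Z.IsSplitRun σ θ a q y z) (h' : Z.IsSplitRun σ θ b q' y z)
    {F : (Var → Bool) → Prop} (hZ : Z.Computes F) (hroot : Z.root < Z.leaf) :
    F (mixAt σ θ a b) := by
  obtain ⟨ha, -, hy0, hylast, hpath⟩ := h
  obtain ⟨hb, hsorted', -, -, hpath'⟩ := h'
  set p := (List.ofFn fun i =>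
    (q i).takeWhile (Z.below σ θ) ++ (q' i).dropWhile (Z.below σ θ)).flatten
  have hp : Z.IsPath Z.root p Z.leaf := isPath_flatten_ofFn_iff.2
    ⟨y, hy0, hylast, fun i => isPath_append_iff.2 ⟨z i, (hpath i).1, (hpath' i).2⟩⟩
  have hne : p ≠ [] := fun hnil => hroot.ne (isPath_nil_iff.1 (hnil ▸ hp))
  have hagree : ∀ l ∈ Z.lits p, mixAt σ θ a b l.1 = l.2 := by
    rintro l ⟨e, hep, hel⟩
    simp only [p, List.mem_flatten, List.mem_ofFn, exists_exists_eq_and, List.mem_append] at hep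
    obtain ⟨i, hei | hei⟩ := hep
    · rw [mixAt, if_pos (lt_of_mem_takeWhile_below hei hel)]
      refine ha l ⟨e, List.mem_flatten.2 ⟨q i, List.mem_ofFn.2 ⟨i, rfl⟩, ?_⟩, hel⟩
      exact (List.takeWhile_sublist _).subset hei
    · rw [mixAt, if_neg (le_of_mem_dropWhile_below (hsorted' i) hei hel).not_gt]
      refine hb l ⟨e, List.mem_flatten.2 ⟨q' i, List.mem_ofFn.2 ⟨i, rfl⟩, ?_⟩, hel⟩
      exact (List.dropWhile_sublist _).subset hei
  exact (hZ _).2 ⟨p, isRootLeafPath_iff.2 ⟨hne, hp⟩, consistent_of_agrees hagree, hagree⟩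

/-- Fooling-set bound: the `2c - 1` inner cut nodes of a split run determine its assignment. -/
theorem card_le_pow_of_fooling {c : ℕ} {σ : Var → ℕ} (hσ : Z.IsNSOBDDOrder c σ)
    {F : (Var → Bool) → Prop} (hZ : Z.Computes F) {ι : Type} [Fintype ι] (a : ι → Var → Bool)
    (ha : ∀ i, F (a i)) (θ : ℕ)
    (hfool : ∀ i j, F (mixAt σ θ (a i) (a j)) → F (mixAt σ θ (a j) (a i)) → i = j) :
    Fintype.card ι ≤ Z.n ^ (2 * c - 1) := by
  choose q y z hrun using fun i => exists_isSplitRun hσ hZ (ha i) θ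
  let Φ : ι → (Fin (c - 1) → Fin Z.n) × (Fin c → Fin Z.n) :=
    fun i => (fun j => y i ⟨j + 1, by omega⟩, z i)
  have hΦ : Function.Injective Φ := by
    intro i j hij
    have hyij : y i = y j := by
      obtain ⟨-, -, hi0, hilast, -⟩ := hrun i
      obtain ⟨-, -, hj0, hjlast, -⟩ := hrun j
      exact Fin.ext_of_interior (hi0.trans hj0.symm) (hilast.trans hjlast.symm)
        (congrFun (congrArg Prod.fst hij))
    have hz : z i = z j := congrArg Prod.snd hij
    have hj := hrun j
    rw [← hyij, ← hz] at hj
    have hroot := hZ.root_lt_leaf (ha i)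
    exact hfool i j ((hrun i).computes_mixAt hj hZ hroot) (hj.computes_mixAt (hrun i) hZ hroot)
  calc Fintype.card ι ≤ Z.n ^ (c - 1) * Z.n ^ c := by
        simpa [Φ] using Fintype.card_le_of_injective Φ hΦ
    _ = Z.n ^ (2 * c - 1) := by rw [← pow_add]; congr 1; omega

end NBP

theorem exists_isCutMatching_threshold {V : Type} [Fintype V] {G : SimpleGraph V} {t : ℕ}
    (hmw : t ≤ mw G) {f : V → ℕ} (hf : Function.Injective f) :
    ∃ θ M, IsCutMatching G {v | f v < θ} M ∧ t ≤ M.card := by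
  rcases Nat.eq_zero_or_pos t with rfl | ht
  · exact ⟨0, ∅, by simp [IsCutMatching], le_rfl⟩
  let _ : LinearOrder V := LinearOrder.lift' f hf
  let e := monoEquivOfFin V rfl
  have hnot : ¬ mwLE G (t - 1) := fun h => by
    have : mw G ≤ t - 1 := Nat.sInf_le (show t - 1 ∈ {w | mwLE G w} from h)
    omega
  simp only [mwLE, not_exists, not_forall, not_le] at hnot
  obtain ⟨i, M, hM, hcard⟩ := hnot e.toEquiv
  obtain ⟨e₀, he₀⟩ := Finset.card_pos.1 (by omega : 0 < M.card)
  obtain ⟨-, w, -, -, hw⟩ := hM.2.1 e₀ he₀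
  have hi : i < Fintype.card V := by
    simp only [Set.mem_ofPred_eq, not_lt] at hw
    exact hw.trans_lt (e.symm w).2
  refine ⟨f (e ⟨i, hi⟩), M, ?_, by omega⟩
  convert hM using 2
  ext v
  exact (e.symm_apply_lt (x := ⟨i, hi⟩)).symm

variable {V : Type} {G : SimpleGraph V}

open Classical in
/-- The assignment attached to a cut matching `M` of `(A, Aᶜ)` and `S ⊆ M`: the edge variables
of `M` are false, and each edge of `M` has exactly one false end, on the `A` side iff the edge
is not in `S`. -/
noncomputable def matchingAssignment (G : SimpleGraph V) (A : Set V) (M S : Finset (Sym2 V)) :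
    CNFVar G → Bool :=
  Sum.elim (fun w => !decide (∃ e ∈ M, w ∈ e ∧ (w ∈ A ↔ e ∉ S))) (fun f => decide (f.1 ∉ M))

theorem matchingAssignment_inl_eq_false {A : Set V} {M S : Finset (Sym2 V)} {e : Sym2 V} {w : V}
    (he : e ∈ M) (hw : w ∈ e) (hwS : w ∈ A ↔ e ∉ S) :
    matchingAssignment G A M S (.inl w) = false := by
  simpa [matchingAssignment] using ⟨e, he, hw, hwS⟩

theorem matchingAssignment_inl_eq_true {A : Set V} {M S : Finset (Sym2 V)}
    (hM : IsCutMatching G A M) {e : Sym2 V} {w : V} (he : e ∈ M) (hw : w ∈ e)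
    (hwS : w ∈ A ↔ e ∈ S) : matchingAssignment G A M S (.inl w) = true := by
  simp only [matchingAssignment, Sum.elim_inl, Bool.not_eq_eq_eq_not, Bool.not_true,
    decide_eq_false_iff_not, not_exists, not_and]
  intro e' he' hwe' hwS'
  have hne : e ≠ e' := by rintro rfl; tauto
  exact hM.2.2 e he e' he' hne w hw hwe'

theorem cnfSat_matchingAssignment {A : Set V} {M : Finset (Sym2 V)} (hM : IsCutMatching G A M)
    (S : Finset (Sym2 V)) : cnfSat G (matchingAssignment G A M S) := by
  intro f x y hxy
  by_cases hf : f.1 ∈ M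
  · obtain ⟨u, v, huv, hu, hv⟩ := hM.2.1 _ hf
    have hend : ∃ w ∈ f.1, (w ∈ A ↔ f.1 ∈ S) := by
      by_cases hS : f.1 ∈ S
      · exact ⟨u, huv ▸ Sym2.mem_mk_left u v, by simp [hu, hS]⟩
      · exact ⟨v, huv ▸ Sym2.mem_mk_right u v, by simp [hv, hS]⟩
    obtain ⟨w, hwf, hw⟩ := hend
    have htrue := matchingAssignment_inl_eq_true hM hf hwf hw
    rw [hxy, Sym2.mem_iff] at hwf
    rcases hwf with rfl | rfl
    · exact Or.inl htrue
    · exact Or.inr (Or.inr htrue)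
  · exact Or.inr (Or.inl (by simp [matchingAssignment, hf]))

/-- Below the threshold the mixture agrees with `S`, above it with `S'`, so an edge of
`S' \ S` has both ends false. -/
theorem subset_of_cnfSat_mixAt {A : Set V} {M S S' : Finset (Sym2 V)} (hM : IsCutMatching G A M)
    {σ : CNFVar G → ℕ} {θ : ℕ} (hA : ∀ v, σ (.inl v) < θ ↔ v ∈ A) (hS' : S' ⊆ M)
    (h : cnfSat G (NBP.mixAt σ θ (matchingAssignment G A M S) (matchingAssignment G A M S'))) :
    S' ⊆ S := by
  intro e heS'
  by_contra heS
  have heM := hS' heS'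
  obtain ⟨u, v, rfl, hu, hv⟩ := hM.2.1 _ heM
  rcases h ⟨s(u, v), hM.1 _ heM⟩ u v rfl with h | h | h
  all_goals unfold NBP.mixAt at h
  · rw [if_pos ((hA u).2 hu),
      matchingAssignment_inl_eq_false heM (Sym2.mem_mk_left u v) (by simp [hu, heS])] at h
    exact Bool.false_ne_true h
  · split_ifs at h <;> simp [matchingAssignment, heM] at h
  · rw [if_neg (mt (hA v).1 hv),
      matchingAssignment_inl_eq_false heM (Sym2.mem_mk_right u v) (by simp [hv, heS'])] at h
    exact Bool.false_ne_true h

theorem two_rpow_div_le_of_pow_le {t c n : ℕ} (hn : 1 ≤ n) (h : 2 ^ t ≤ n ^ (2 * c - 1)) :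
    (2 : ℝ) ^ ((t : ℝ) / (2 * (c : ℝ) - 1)) ≤ n := by
  rcases Nat.eq_zero_or_pos c with rfl | hc
  · calc (2 : ℝ) ^ ((t : ℝ) / (2 * ((0 : ℕ) : ℝ) - 1)) ≤ 1 :=
          Real.rpow_le_one_of_one_le_of_nonpos one_le_two (by simp [div_neg])
      _ ≤ n := by exact_mod_cast hn
  have hk : ((2 * c - 1 : ℕ) : ℝ) = 2 * (c : ℝ) - 1 := by
    rw [Nat.cast_sub (by omega)]
    push_cast
    ring
  rw [← hk, div_eq_mul_inv, Real.rpow_mul zero_le_two, Real.rpow_natCast,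
    Real.rpow_inv_le_iff_of_pos (by positivity) (Nat.cast_nonneg n) (by norm_cast; omega),
    Real.rpow_natCast]
  exact_mod_cast h

theorem stmt7_general {V : Type} [Fintype V] (G : SimpleGraph V) (t c : ℕ)
    (hmw : t ≤ mw G)
    (Z : NBP (CNFVar G))
    (hcomp : Z.Computes (cnfSat G))
    (hobdd : Z.IsNSOBDD c) :
    (2 : ℝ) ^ ((t : ℝ) / (2 * (c : ℝ) - 1)) ≤ (Z.n : ℝ) := by
  obtain ⟨σ, hσinj, hσ⟩ := hobdd.exists_order
  obtain ⟨θ, M, hM, htM⟩ :=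
    exists_isCutMatching_threshold hmw (hσinj.comp Sum.inl_injective)
  have hcount : 2 ^ M.card ≤ Z.n ^ (2 * c - 1) := by
    have := NBP.card_le_pow_of_fooling hσ hcomp
      (fun S : M.powerset => matchingAssignment G _ M S) (fun S => cnfSat_matchingAssignment hM S) θ
      fun S S' h h' => Subtype.ext <| subset_antisymm
        (subset_of_cnfSat_mixAt hM (fun _ => Iff.rfl) (Finset.mem_powerset.1 S.2) h')
        (subset_of_cnfSat_mixAt hM (fun _ => Iff.rfl) (Finset.mem_powerset.1 S'.2) h)
    simpa using this
  exact two_rpow_div_le_of_pow_le (Fin.pos Z.root)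
    ((Nat.pow_le_pow_right two_pos htM).trans hcount)

/-- Let `G` be a finite graph of matching width at least `t`, `c` positive,
and `Z` a `c`-NSOBDD computing the function represented by `CNF(G)`.
Then `|Z| ≥ 2^(t/(2c-1))`. -/
theorem stmt7 {V : Type} [Fintype V] (G : SimpleGraph V) (t c : ℕ) (hc : 1 ≤ c)
    (hmw : t ≤ mw G)
    (Z : NBP (CNFVar G))
    (hcomp : Z.Computes (cnfSat G))
    (hobdd : Z.IsNSOBDD c) :
    (2 : ℝ) ^ ((t : ℝ) / (2 * (c : ℝ) - 1)) ≤ (Z.n : ℝ) :=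
  stmt7_general G t c hmw Z hcomp hobdd
end

section
/- For every finite graph G, the matching width of G is at most the pathwidth of G plus one: mw(G) ≤ pw(G) + 1. -/
/-- `G` admits a path decomposition of width at most `w`: bags indexed by a
path `x_1, …, x_m` satisfying the union, containment and connectedness
(interval) conditions, all bags having at most `w + 1` vertices. -/
def PathwidthLE {V : Type} (G : SimpleGraph V) (w : ℕ) : Prop :=
  ∃ (m : ℕ) (B : Fin m → Finset V),
    (∀ v : V, ∃ i, v ∈ B i) ∧
    (∀ u v : V, G.Adj u v → ∃ i, u ∈ B i ∧ v ∈ B i) ∧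
    (∀ (v : V) (i j k : Fin m), i ≤ j → j ≤ k → v ∈ B i → v ∈ B k → v ∈ B j) ∧
    (∀ i, (B i).card ≤ w + 1)

/-- The pathwidth of a graph. -/
noncomputable def pw {V : Type} (G : SimpleGraph V) : ℕ :=
  sInf {w | PathwidthLE G w}

/-!
Order the vertices by the index of the first bag containing them, and cut this order just before
a vertex `x` whose first bag is `B t`. An edge `uv` crossing the cut, with `u` on the left, satisfies
`first u ≤ t ≤ first v ≤ j` for any bag `B j` containing both `u` and `v`, so `u ∈ B t` by the
interval property. The edges of a matching thus have pairwise distinct endpoints in `B t`, whence at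
most `pw G + 1` of them.
-/

theorem exists_equiv_fin_monotone_comp {V α : Type*} [Fintype V] [LinearOrder α] (f : V → α) :
    ∃ σ : Fin (Fintype.card V) ≃ V, Monotone (f ∘ σ) :=
  let e := (Fintype.equivFin V).symm
  ⟨(Tuple.sort (f ∘ e)).trans e, Tuple.monotone_sort (f ∘ e)⟩

namespace IsCutMatching

variable {V : Type} {G : SimpleGraph V} {A : Set V} {M : Finset (Sym2 V)}

theorem card_le_of_forall_exists_mem (hM : IsCutMatching G A M) {S : Finset V}
    (hS : ∀ e ∈ M, ∃ u ∈ S, u ∈ e) : M.card ≤ S.card :=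
  Finset.card_le_card_of_forall_subsingleton (fun e u => u ∈ e) hS fun u _ _ he _ he' =>
    by_contra fun hne => hM.2.2 _ he.1 _ he'.1 hne u he.2 he'.2

theorem eq_empty_of_forall_mem (hM : IsCutMatching G A M) (hA : ∀ v, v ∈ A) : M = ∅ :=
  Finset.eq_empty_of_forall_notMem fun e he =>
    let ⟨_, v, _, _, hv⟩ := hM.2.1 e he
    hv (hA v)

end IsCutMatching

theorem pathwidthLE_card {V : Type} [Fintype V] (G : SimpleGraph V) :
    PathwidthLE G (Fintype.card V) :=
  ⟨1, fun _ => Finset.univ, fun v => ⟨0, Finset.mem_univ v⟩,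
    fun u v _ => ⟨0, Finset.mem_univ u, Finset.mem_univ v⟩,
    fun v _ _ _ _ _ _ _ => Finset.mem_univ v, fun _ => Nat.le_succ _⟩

theorem mwLE_succ_of_pathwidthLE {V : Type} [Fintype V] {G : SimpleGraph V} {w : ℕ}
    (h : PathwidthLE G w) : mwLE G (w + 1) := by
  obtain ⟨m, B, hcov, hedge, hconn, hcard⟩ := h
  let bagsOf (v : V) : Set (Fin m) := {j | v ∈ B j}
  let first : V → Fin m := fun v => wellFounded_lt.min (bagsOf v) (hcov v)
  have mem_first : ∀ v, v ∈ B (first v) := fun v => wellFounded_lt.min_mem (bagsOf v) (hcov v)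
  have first_le : ∀ v j, v ∈ B j → first v ≤ j := fun v _ hj =>
    wellFounded_lt.min_le (s := bagsOf v) hj
  obtain ⟨σ, hσ⟩ := exists_equiv_fin_monotone_comp first
  refine ⟨σ, fun i M hM => ?_⟩
  by_cases hi : i < Fintype.card V
  · let t := first (σ ⟨i, hi⟩)
    have crossing_mem_bag : ∀ e ∈ M, ∃ u ∈ B t, u ∈ e := by
      intro e he
      obtain ⟨u, v, rfl, hu, hv⟩ := hM.2.1 e he
      obtain ⟨j, huj, hvj⟩ := hedge u v (hM.1 _ he)
      have hut : first u ≤ t := by simpa using hσ (show σ.symm u ≤ ⟨i, hi⟩ from le_of_lt hu)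
      have htv : t ≤ first v := by simpa using hσ (show ⟨i, hi⟩ ≤ σ.symm v from not_lt.1 hv)
      exact ⟨u, hconn u _ t j hut (htv.trans (first_le v j hvj)) (mem_first u) huj,
        Sym2.mem_mk_left u v⟩
    exact (hM.card_le_of_forall_exists_mem crossing_mem_bag).trans (hcard t)
  · rw [hM.eq_empty_of_forall_mem fun v => lt_of_lt_of_le (σ.symm v).isLt (not_lt.1 hi)]
    exact Nat.zero_le _

/-- For every finite graph `G`, `mw(G) ≤ pw(G) + 1`. -/
theorem stmt11 {V : Type} [Fintype V] (G : SimpleGraph V) : mw G ≤ pw G + 1 := by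
  have hpw : PathwidthLE G (pw G) :=
    Nat.sInf_mem (s := {w | PathwidthLE G w}) ⟨_, pathwidthLE_card G⟩
  exact Nat.sInf_le (mwLE_succ_of_pathwidthLE hpw)
end

section
/- For every finite graph G, the pathwidth of G is at most twice the matching width of G: pw(G) ≤ 2·mw(G). -/
section Stmt12Aux

set_option linter.unusedSectionVars false

variable {V : Type} [Fintype V]

/-- pairwise disjoint set of Sym2's -/
def PD (M : Finset (Sym2 V)) : Prop :=
  ∀ e₁ ∈ M, ∀ e₂ ∈ M, e₁ ≠ e₂ → ∀ x : V, x ∈ e₁ → x ∉ e₂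

lemma PD_mono {M N : Finset (Sym2 V)} (h : N ⊆ M) (hM : PD M) : PD N :=
  fun e₁ h₁ e₂ h₂ hne x hx => hM e₁ (h h₁) e₂ (h h₂) hne x hx

lemma PD_empty : PD (∅ : Finset (Sym2 V)) := by
  intro e₁ h₁; simp at h₁

noncomputable def vertsF (M : Finset (Sym2 V)) : Finset V :=
  @Finset.filter V (fun v => ∃ e ∈ M, v ∈ e) (fun _ => Classical.propDecidable _) Finset.univ

lemma mem_vertsF {M : Finset (Sym2 V)} {v : V} : v ∈ vertsF M ↔ ∃ e ∈ M, v ∈ e := by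
  classical
  simp [vertsF]

lemma card_vertsF_le (M : Finset (Sym2 V)) : (vertsF M).card ≤ 2 * M.card := by
  classical
  have hpair : ∀ e : Sym2 V, (Finset.univ.filter (· ∈ e)).card ≤ 2 := by
    intro e
    induction e using Sym2.ind with
    | _ a b =>
      have hsub : (Finset.univ.filter (· ∈ s(a, b))) ⊆ {a, b} := by
        intro v hv
        simp only [Finset.mem_filter, Sym2.mem_iff] at hv
        simp [hv.2]
      refine le_trans (Finset.card_le_card hsub) ?_
      refine le_trans (Finset.card_insert_le a {b}) ?_
      simp
  have hsub : vertsF M ⊆ M.biUnion (fun e => Finset.univ.filter (· ∈ e)) := by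
    intro v hv
    obtain ⟨e, he, hve⟩ := mem_vertsF.mp hv
    exact Finset.mem_biUnion.mpr ⟨e, he, by simp [hve]⟩
  refine le_trans (Finset.card_le_card hsub) (le_trans Finset.card_biUnion_le ?_)
  refine le_trans (Finset.sum_le_sum (fun e _ => hpair e)) ?_
  rw [Finset.sum_const, smul_eq_mul, mul_comm]

lemma exists_maximal_matching (Ec B0 : Finset (Sym2 V)) (hB0 : B0 ⊆ Ec) (hpd : PD B0) :
    ∃ N, B0 ⊆ N ∧ N ⊆ Ec ∧ PD N ∧
      ∀ e ∈ Ec, e ∉ N → ∃ f ∈ N, ∃ x : V, x ∈ e ∧ x ∈ f := by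
  classical
  set S := Ec.powerset.filter (fun N => B0 ⊆ N ∧ PD N) with hSdef
  have hmemS : ∀ {N}, N ∈ S ↔ (N ⊆ Ec ∧ (B0 ⊆ N ∧ PD N)) := by
    intro N; simp [hSdef, Finset.mem_powerset]
  have hS : S.Nonempty := ⟨B0, hmemS.mpr ⟨hB0, le_refl _, hpd⟩⟩
  obtain ⟨N, hN, hmax⟩ := S.exists_max_image Finset.card hS
  obtain ⟨hNE, hBN, hNpd⟩ := hmemS.mp hN
  refine ⟨N, hBN, hNE, hNpd, ?_⟩
  intro e heE heN
  by_contra hcon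
  push_neg at hcon
  have hins : insert e N ∈ S := by
    refine hmemS.mpr ⟨Finset.insert_subset heE hNE, le_trans hBN (Finset.subset_insert _ _), ?_⟩
    intro e₁ h₁ e₂ h₂ hne x hx₁ hx₂
    rcases Finset.mem_insert.mp h₁ with h₁e | h₁ <;> rcases Finset.mem_insert.mp h₂ with h₂e | h₂
    · exact hne (h₁e.trans h₂e.symm)
    · exact hcon e₂ h₂ x (h₁e ▸ hx₁) hx₂
    · exact hcon e₁ h₁ x (h₂e ▸ hx₂) hx₁
    · exact hNpd e₁ h₁ e₂ h₂ hne x hx₁ hx₂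
  have := hmax _ hins
  rw [Finset.card_insert_of_notMem heN] at this
  omega

lemma pathwidthLE_of_mwLE (G : SimpleGraph V) (w : ℕ) (h : mwLE G w) :
    PathwidthLE G (2 * w) := by
  classical
  obtain ⟨σ, hσ⟩ := h
  set t : V → ℕ := fun v => ((σ.symm v : Fin (Fintype.card V)) : ℕ) with ht
  have t_lt : ∀ v, t v < Fintype.card V := fun v => (σ.symm v).isLt
  have t_sigma : ∀ k : Fin (Fintype.card V), t (σ k) = (k : ℕ) := fun k => by simp [ht]
  have t_eq : ∀ {v : V} {k : Fin (Fintype.card V)}, t v = (k : ℕ) → v = σ k := by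
    intro v k hv
    have h2 : σ.symm v = k := Fin.ext hv
    rw [← h2, Equiv.apply_symm_apply]
  set Ec : ℕ → Finset (Sym2 V) := fun i =>
    Finset.univ.filter
      (fun e => e ∈ G.edgeSet ∧ ∃ u x : V, e = s(u, x) ∧ t u < i ∧ ¬ t x < i) with hEc
  have mem_Ec : ∀ {i : ℕ} {e : Sym2 V},
      e ∈ Ec i ↔ e ∈ G.edgeSet ∧ ∃ u x : V, e = s(u, x) ∧ t u < i ∧ ¬ t x < i := by
    intro i e; simp [hEc]
  have hmem_set : ∀ (v : V) (i : ℕ),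
      (v ∈ {v : V | ((σ.symm v : Fin (Fintype.card V)) : ℕ) < i}) = (t v < i) := by
    intro v i
    rw [ht]
    rfl
  have hstep : ∀ (i : ℕ) (B0 : Finset (Sym2 V)), ∃ N : Finset (Sym2 V),
      (B0 ⊆ Ec i → PD B0 → B0 ⊆ N) ∧ N ⊆ Ec i ∧ PD N ∧
        ∀ e ∈ Ec i, e ∉ N → ∃ f ∈ N, ∃ x : V, x ∈ e ∧ x ∈ f := by
    intro i B0
    by_cases hc : B0 ⊆ Ec i ∧ PD B0
    · obtain ⟨N, h1, h2, h3, h4⟩ := exists_maximal_matching (Ec i) B0 hc.1 hc.2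
      exact ⟨N, fun _ _ => h1, h2, h3, h4⟩
    · obtain ⟨N, _, h2, h3, h4⟩ :=
        exists_maximal_matching (Ec i) ∅ (Finset.empty_subset _) PD_empty
      exact ⟨N, fun ha hb => absurd ⟨ha, hb⟩ hc, h2, h3, h4⟩
  choose step hstep1 hstep2 hstep3 hstep4 using hstep
  set M : ℕ → Finset (Sym2 V) :=
    fun i => Nat.rec ∅ (fun i Mi => step (i + 1) (Mi.filter (· ∈ Ec (i + 1)))) i with hM
  have Msucc : ∀ i, M (i + 1) = step (i + 1) ((M i).filter (· ∈ Ec (i + 1))) := fun i => rfl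
  have hsub : ∀ i, M i ⊆ Ec i := by
    intro i
    cases i with
    | zero => intro e he; simp [hM] at he
    | succ i => rw [Msucc]; exact hstep2 _ _
  have hPD : ∀ i, PD (M i) := by
    intro i
    cases i with
    | zero =>
      have h0 : M 0 = ∅ := rfl
      rw [h0]; exact PD_empty
    | succ i => rw [Msucc]; exact hstep3 _ _
  have hpersist : ∀ i, ∀ e ∈ M i, e ∈ Ec (i + 1) → e ∈ M (i + 1) := by
    intro i e he heE
    rw [Msucc]
    refine hstep1 (i + 1) ((M i).filter (· ∈ Ec (i + 1))) ?_ ?_ ?_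
    · intro f hf; exact (Finset.mem_filter.mp hf).2
    · exact PD_mono (Finset.filter_subset _ _) (hPD i)
    · exact Finset.mem_filter.mpr ⟨he, heE⟩
  have hmax : ∀ i, ∀ e ∈ Ec i, e ∉ M i → ∃ f ∈ M i, ∃ x : V, x ∈ e ∧ x ∈ f := by
    intro i e he hne
    cases i with
    | zero =>
      exfalso
      obtain ⟨-, u, x, -, hu, -⟩ := mem_Ec.mp he
      omega
    | succ i => rw [Msucc] at hne ⊢; exact hstep4 _ _ e he hne
  have hcard : ∀ i, (M i).card ≤ w := by
    intro i
    refine hσ i (M i) ⟨?_, ?_, ?_⟩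
    · intro e he; exact (mem_Ec.mp (hsub i he)).1
    · intro e he
      obtain ⟨-, u, x, hex, hu, hx⟩ := mem_Ec.mp (hsub i he)
      refine ⟨u, x, hex, ?_, ?_⟩
      · rw [hmem_set]; exact hu
      · rw [hmem_set]; exact hx
    · exact hPD i
  have getRep : ∀ {i : ℕ} {e : Sym2 V}, e ∈ M i →
      ∃ u x : V, e = s(u, x) ∧ t u < i ∧ i ≤ t x := by
    intro i e he
    obtain ⟨-, u, x, hex, hu, hx⟩ := mem_Ec.mp (hsub i he)
    exact ⟨u, x, hex, hu, Nat.le_of_not_lt hx⟩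
  have edge_mem : ∀ {i : ℕ} {e : Sym2 V}, e ∈ M i → e ∈ G.edgeSet :=
    fun {i e} he => (mem_Ec.mp (hsub i he)).1
  have persist_to : ∀ (u x : V) (i j : ℕ), t u < i → i ≤ j → j ≤ t x →
      s(u, x) ∈ M i → s(u, x) ∈ M j := by
    intro u x i j hu hij hjx he
    induction j, hij using Nat.le_induction with
    | base => exact he
    | succ j hij ih =>
      have hej : s(u, x) ∈ M j := ih (by omega)
      exact hpersist j _ hej (mem_Ec.mpr ⟨edge_mem hej, u, x, rfl, by omega, by omega⟩)
  have no_regain : ∀ (u : V) (j k : ℕ), t u < j → j ≤ k →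
      u ∉ vertsF (M j) → u ∉ vertsF (M k) := by
    intro u j k huj hjk hnot hmem
    obtain ⟨e, he, hue⟩ := mem_vertsF.mp hmem
    obtain ⟨a, b, hab, hak, hkb⟩ := getRep he
    subst hab
    rcases Sym2.mem_iff.mp hue with rfl | rfl
    · have heEj : s(u, b) ∈ Ec j := mem_Ec.mpr ⟨edge_mem he, u, b, rfl, huj, by omega⟩
      have heMj : s(u, b) ∉ M j := fun hc =>
        hnot (mem_vertsF.mpr ⟨_, hc, Sym2.mem_mk_left u b⟩)
      obtain ⟨f, hf, y, hye, hyf⟩ := hmax j _ heEj heMj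
      rcases Sym2.mem_iff.mp hye with rfl | rfl
      · exact hnot (mem_vertsF.mpr ⟨f, hf, hyf⟩)
      · obtain ⟨p, q, hpq, hpj, hjq⟩ := getRep hf
        subst hpq
        rcases Sym2.mem_iff.mp hyf with rfl | rfl
        · omega
        · have hfk : s(p, y) ∈ M k := persist_to p y j k hpj hjk (by omega) hf
          have hfe : s(u, y) ≠ s(p, y) := by
            intro hEq
            exact hnot (mem_vertsF.mpr ⟨s(u, y), by rw [hEq]; exact hf, Sym2.mem_mk_left u y⟩)
          exact hPD k _ he _ hfk hfe y (Sym2.mem_mk_right u y) (Sym2.mem_mk_right p y)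
    · omega
  have right_persist : ∀ (u : V) (j j' : ℕ), j ≤ j' → j' ≤ t u →
      u ∈ vertsF (M j) → u ∈ vertsF (M j') := by
    intro u j j' hjj hju hmem
    obtain ⟨e, he, hue⟩ := mem_vertsF.mp hmem
    obtain ⟨a, b, hab, haj, hjb⟩ := getRep he
    subst hab
    rcases Sym2.mem_iff.mp hue with rfl | rfl
    · omega
    · exact mem_vertsF.mpr ⟨_, persist_to a u j j' haj hjj hju he, Sym2.mem_mk_right a u⟩
  -- the bags
  set B : Fin (Fintype.card V) → Finset V :=
    fun k => insert (σ k) (vertsF (M (k : ℕ)) ∪ vertsF (M ((k : ℕ) + 1))) with hB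
  have mem_B : ∀ (v : V) (k : Fin (Fintype.card V)),
      v ∈ B k ↔ v = σ k ∨ v ∈ vertsF (M (k : ℕ)) ∨ v ∈ vertsF (M ((k : ℕ) + 1)) := by
    intro v k; simp [hB]
  refine ⟨Fintype.card V, B, ?_, ?_, ?_, ?_⟩
  · -- union
    intro v
    exact ⟨σ.symm v, (mem_B v _).mpr (Or.inl (Equiv.apply_symm_apply σ v).symm)⟩
  · -- containment
    have key : ∀ u x : V, G.Adj u x → t u < t x → ∃ i : Fin (Fintype.card V), u ∈ B i ∧ x ∈ B i := by
      intro u x hadj hpq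
      have hedge : s(u, x) ∈ G.edgeSet := G.mem_edgeSet.mpr hadj
      by_cases hA : x ∈ vertsF (M (t u + 1))
      · refine ⟨σ.symm u, ?_, ?_⟩
        · exact (mem_B u _).mpr (Or.inl (Equiv.apply_symm_apply σ u).symm)
        · exact (mem_B x _).mpr (Or.inr (Or.inr hA))
      · by_cases hB1 : ∃ j, (t u + 1 < j ∧ j ≤ t x) ∧ x ∈ vertsF (M j)
        · have ha1 : t u + 1 < Nat.find hB1 := (Nat.find_spec hB1).1.1
          have ha2 : Nat.find hB1 ≤ t x := (Nat.find_spec hB1).1.2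
          have hax : x ∈ vertsF (M (Nat.find hB1)) := (Nat.find_spec hB1).2
          set a := Nat.find hB1 with ha
          have hxnot : x ∉ vertsF (M (a - 1)) := by
            rcases Nat.eq_or_lt_of_le (show t u + 2 ≤ a by omega) with heq | hlt
            · have h3 : a - 1 = t u + 1 := by omega
              rw [h3]; exact hA
            · intro hc
              exact Nat.find_min hB1 (show a - 1 < a by omega) ⟨⟨by omega, by omega⟩, hc⟩
          have heE : s(u, x) ∈ Ec (a - 1) :=
            mem_Ec.mpr ⟨hedge, u, x, rfl, by omega, by omega⟩
          have heM : s(u, x) ∉ M (a - 1) := fun hc =>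
            hxnot (mem_vertsF.mpr ⟨_, hc, Sym2.mem_mk_right u x⟩)
          obtain ⟨f, hf, y, hye, hyf⟩ := hmax (a - 1) _ heE heM
          have hu : u ∈ vertsF (M (a - 1)) := by
            rcases Sym2.mem_iff.mp hye with rfl | rfl
            · exact mem_vertsF.mpr ⟨f, hf, hyf⟩
            · exact absurd (mem_vertsF.mpr ⟨f, hf, hyf⟩) hxnot
          have han : a - 1 < Fintype.card V := by have := t_lt x; omega
          refine ⟨⟨a - 1, han⟩, ?_, ?_⟩
          · exact (mem_B u _).mpr (Or.inr (Or.inl hu))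
          · refine (mem_B x _).mpr (Or.inr (Or.inr ?_))
            have h4 : (((⟨a - 1, han⟩ : Fin (Fintype.card V)) : ℕ)) + 1 = a := by simp; omega
            rw [h4]; exact hax
        · push_neg at hB1
          have hxq : x ∉ vertsF (M (t x)) := by
            rcases Nat.eq_or_lt_of_le (show t u + 1 ≤ t x by omega) with heq | hlt
            · rw [← heq]; exact hA
            · exact hB1 (t x) ⟨hlt, le_refl _⟩
          have heE : s(u, x) ∈ Ec (t x) := mem_Ec.mpr ⟨hedge, u, x, rfl, hpq, by omega⟩
          have heM : s(u, x) ∉ M (t x) := fun hc =>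
            hxq (mem_vertsF.mpr ⟨_, hc, Sym2.mem_mk_right u x⟩)
          obtain ⟨f, hf, y, hye, hyf⟩ := hmax (t x) _ heE heM
          have hu : u ∈ vertsF (M (t x)) := by
            rcases Sym2.mem_iff.mp hye with rfl | rfl
            · exact mem_vertsF.mpr ⟨f, hf, hyf⟩
            · exact absurd (mem_vertsF.mpr ⟨f, hf, hyf⟩) hxq
          refine ⟨σ.symm x, (mem_B u _).mpr (Or.inr (Or.inl hu)),
            (mem_B x _).mpr (Or.inl (Equiv.apply_symm_apply σ x).symm)⟩
    intro u x hadj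
    have hne : t u ≠ t x := by
      intro hEq
      exact hadj.ne (σ.symm.injective (Fin.ext hEq))
    rcases Nat.lt_or_ge (t u) (t x) with hlt | hge
    · exact key u x hadj hlt
    · obtain ⟨i, h1, h2⟩ := key x u hadj.symm (by omega)
      exact ⟨i, h2, h1⟩
  · -- interval property
    intro v i j k hij hjk hvi hvk
    have hij' : (i : ℕ) ≤ (j : ℕ) := hij
    have hjk' : (j : ℕ) ≤ (k : ℕ) := hjk
    rcases Nat.lt_trichotomy (j : ℕ) (t v) with hlt | heq | hgt
    · rcases (mem_B v i).mp hvi with hv1 | hv2 | hv3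
      · exfalso
        have h5 : t v = (i : ℕ) := by rw [hv1]; exact t_sigma i
        omega
      · exact (mem_B v j).mpr (Or.inr (Or.inl (right_persist v i j hij' (by omega) hv2)))
      · rcases Nat.lt_or_ge (j : ℕ) ((i : ℕ) + 1) with hc | hc
        · have h6 : (i : ℕ) + 1 = (j : ℕ) + 1 := by omega
          exact (mem_B v j).mpr (Or.inr (Or.inr (h6 ▸ hv3)))
        · exact (mem_B v j).mpr
            (Or.inr (Or.inl (right_persist v ((i : ℕ) + 1) j hc (by omega) hv3)))
    · exact (mem_B v j).mpr (Or.inl (t_eq heq.symm))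
    · have hjmem : v ∈ vertsF (M (j : ℕ)) := by
        by_contra hC
        rcases (mem_B v k).mp hvk with hv1 | hv2 | hv3
        · have h5 : t v = (k : ℕ) := by rw [hv1]; exact t_sigma k
          omega
        · exact no_regain v j k hgt hjk' hC hv2
        · exact no_regain v j ((k : ℕ) + 1) hgt (by omega) hC hv3
      exact (mem_B v j).mpr (Or.inr (Or.inl hjmem))
  · -- size
    intro k
    have hki : t (σ k) = (k : ℕ) := t_sigma k
    have hsplit : ∀ e ∈ M (k : ℕ), σ k ∈ e ∨ e ∈ M ((k : ℕ) + 1) := by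
      intro e he
      obtain ⟨a, b, hab, hai, hib⟩ := getRep he
      rcases Nat.eq_or_lt_of_le hib with heq | hlt
      · left
        have hb : b = σ k := t_eq heq.symm
        rw [hab, hb]; exact Sym2.mem_mk_right _ _
      · right
        exact hpersist _ e he (mem_Ec.mpr ⟨edge_mem he, a, b, hab, by omega, by omega⟩)
    by_cases hdead : ∃ e ∈ M (k : ℕ), σ k ∈ e
    · obtain ⟨e₀, he₀, hke₀⟩ := hdead
      obtain ⟨a₀, b₀, hab₀, ha₀, hib₀⟩ := getRep he₀
      have hb₀k : b₀ = σ k := by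
        rw [hab₀] at hke₀
        rcases Sym2.mem_iff.mp hke₀ with h | h
        · exfalso; rw [← h] at ha₀; omega
        · exact h.symm
      rw [hb₀k] at hab₀
      have hothers : ∀ e ∈ M (k : ℕ), e ≠ e₀ → e ∈ M ((k : ℕ) + 1) := by
        intro e he hnee
        rcases hsplit e he with hk1 | hmem
        · exact absurd hke₀ (hPD (k : ℕ) e he e₀ he₀ hnee (σ k) hk1)
        · exact hmem
      have hBsub : B k ⊆ insert (σ k) (insert a₀ (vertsF (M ((k : ℕ) + 1)))) := by
        intro v hv
        rcases (mem_B v k).mp hv with h | h | h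
        · simp [h]
        · obtain ⟨e, he, hve⟩ := mem_vertsF.mp h
          by_cases hee : e = e₀
          · subst hee
            rw [hab₀] at hve
            rcases Sym2.mem_iff.mp hve with rfl | rfl
            · simp
            · simp
          · have hmem := hothers e he hee
            simp [mem_vertsF.mpr ⟨e, hmem, hve⟩]
        · simp [h]
      by_cases hov : a₀ ∈ vertsF (M ((k : ℕ) + 1)) ∨ σ k ∈ vertsF (M ((k : ℕ) + 1))
      · have hsub2 : B k ⊆ insert (σ k) (insert a₀ (vertsF (M ((k : ℕ) + 1)))) := hBsub
        have hc1 := card_vertsF_le (M ((k : ℕ) + 1))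
        have hc2 := hcard ((k : ℕ) + 1)
        rcases hov with h | h
        · have heq2 : insert (σ k) (insert a₀ (vertsF (M ((k : ℕ) + 1))))
              = insert (σ k) (vertsF (M ((k : ℕ) + 1))) := by
            rw [Finset.insert_eq_self.mpr h]
          have := Finset.card_le_card (heq2 ▸ hBsub)
          have h7 := Finset.card_insert_le (σ k) (vertsF (M ((k : ℕ) + 1)))
          omega
        · have heq2 : insert (σ k) (insert a₀ (vertsF (M ((k : ℕ) + 1))))
              = insert a₀ (vertsF (M ((k : ℕ) + 1))) := by
            rw [Finset.insert_comm, Finset.insert_eq_self.mpr h]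
          have := Finset.card_le_card (heq2 ▸ hBsub)
          have h7 := Finset.card_insert_le a₀ (vertsF (M ((k : ℕ) + 1)))
          omega
      · push_neg at hov
        obtain ⟨hna, hnk⟩ := hov
        have he₀new : e₀ ∉ M ((k : ℕ) + 1) := fun hc =>
          hnk (mem_vertsF.mpr ⟨e₀, hc, hke₀⟩)
        have hcm : (insert e₀ (M ((k : ℕ) + 1))).card ≤ w := by
          refine hσ (k : ℕ) _ ⟨?_, ?_, ?_⟩
          · intro e he
            rcases Finset.mem_insert.mp he with rfl | he
            · exact edge_mem he₀
            · exact edge_mem (i := (k : ℕ) + 1) he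
          · intro e he
            rcases Finset.mem_insert.mp he with rfl | he
            · refine ⟨a₀, σ k, hab₀, ?_, ?_⟩
              · rw [hmem_set]; exact ha₀
              · rw [hmem_set, t_sigma]; omega
            · obtain ⟨a, b, hab, hai, hib⟩ := getRep (i := (k : ℕ) + 1) he
              refine ⟨a, b, hab, ?_, ?_⟩
              · rw [hmem_set]
                rcases Nat.lt_or_ge (t a) (k : ℕ) with h8 | h8
                · exact h8
                · exfalso
                  have h9 : t a = (k : ℕ) := by omega
                  have h10 : a = σ k := t_eq h9
                  apply hnk
                  refine mem_vertsF.mpr ⟨e, he, ?_⟩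
                  rw [hab, ← h10]
                  exact Sym2.mem_mk_left a b
              · rw [hmem_set]
                omega
          · intro e₁ h₁ e₂ h₂ hne12 x hx₁ hx₂
            rcases Finset.mem_insert.mp h₁ with h₁e | h₁ <;>
              rcases Finset.mem_insert.mp h₂ with h₂e | h₂
            · exact hne12 (h₁e.trans h₂e.symm)
            · -- e₁ = e₀, e₂ ∈ M (k+1)
              rw [h₁e, hab₀] at hx₁
              rcases Sym2.mem_iff.mp hx₁ with rfl | rfl
              · exact hna (mem_vertsF.mpr ⟨e₂, h₂, hx₂⟩)
              · exact hnk (mem_vertsF.mpr ⟨e₂, h₂, hx₂⟩)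
            · rw [h₂e, hab₀] at hx₂
              rcases Sym2.mem_iff.mp hx₂ with h | h
              · exact hna (h ▸ mem_vertsF.mpr ⟨e₁, h₁, hx₁⟩)
              · exact hnk (h ▸ mem_vertsF.mpr ⟨e₁, h₁, hx₁⟩)
            · exact hPD ((k : ℕ) + 1) e₁ h₁ e₂ h₂ hne12 x hx₁ hx₂
        rw [Finset.card_insert_of_notMem he₀new] at hcm
        have hc1 := card_vertsF_le (M ((k : ℕ) + 1))
        have h11 := Finset.card_le_card hBsub
        have h12 := Finset.card_insert_le (σ k) (insert a₀ (vertsF (M ((k : ℕ) + 1))))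
        have h13 := Finset.card_insert_le a₀ (vertsF (M ((k : ℕ) + 1)))
        omega
    · have hBsub : B k ⊆ insert (σ k) (vertsF (M ((k : ℕ) + 1))) := by
        intro v hv
        rcases (mem_B v k).mp hv with h | h | h
        · simp [h]
        · obtain ⟨e, he, hve⟩ := mem_vertsF.mp h
          have hmem : e ∈ M ((k : ℕ) + 1) := by
            rcases hsplit e he with hk1 | hm
            · exact absurd ⟨e, he, hk1⟩ hdead
            · exact hm
          exact Finset.mem_insert_of_mem (mem_vertsF.mpr ⟨e, hmem, hve⟩)
        · exact Finset.mem_insert_of_mem h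
      have hc1 := card_vertsF_le (M ((k : ℕ) + 1))
      have hc2 := hcard ((k : ℕ) + 1)
      have h11 := Finset.card_le_card hBsub
      have h12 := Finset.card_insert_le (σ k) (vertsF (M ((k : ℕ) + 1)))
      omega

end Stmt12Aux

/-- For every finite graph `G`, `pw(G) ≤ 2 * mw(G)`. -/
theorem stmt12 {V : Type} [Fintype V] (G : SimpleGraph V) : pw G ≤ 2 * mw G := by
  classical
  have hne : {w | mwLE G w}.Nonempty := by
    refine ⟨Fintype.card (Sym2 V), (Fintype.equivFin V).symm, ?_⟩
    intro i M _
    exact le_trans (Finset.card_le_univ M) (le_of_eq Finset.card_univ)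
  have hmem : mwLE G (mw G) := Nat.sInf_mem hne
  exact Nat.sInf_le (pathwidthLE_of_mwLE G (mw G) hmem)
end

section
/- Let G be a finite bipartite graph, let VC' be a minimum vertex cover of G, and let X ⊆ VC'. Let VC'' be a minimum vertex cover of G \ X (the graph obtained from G by deleting the vertices of X). Then VC'' ∪ X is a minimum vertex cover of G. -/
/-- `C` is a vertex cover of `G`: it meets every edge. -/
def IsVC {V : Type} (G : SimpleGraph V) (C : Set V) : Prop :=
  ∀ ⦃u v : V⦄, G.Adj u v → u ∈ C ∨ v ∈ C

/-- `C` is a minimum (smallest) vertex cover of `G`. -/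
def IsMinVC {V : Type} (G : SimpleGraph V) (C : Set V) : Prop :=
  IsVC G C ∧ ∀ D : Set V, IsVC G D → C.ncard ≤ D.ncard

/-- The graph `G \ X` obtained from `G` by deleting the vertices of `X`
(kept on the same vertex type: all edges incident to `X` are removed). -/
def delVerts {V : Type} (G : SimpleGraph V) (X : Set V) : SimpleGraph V :=
  SimpleGraph.fromRel (fun u v => G.Adj u v ∧ u ∉ X ∧ v ∉ X)

/-- Let `G` be a finite bipartite graph (with parts `U` and `W`), `VC'` a
minimum vertex cover of `G`, `X ⊆ VC'`, and `VC''` a minimum vertex cover of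
`G \ X`. Then `VC'' ∪ X` is a minimum vertex cover of `G`. -/
theorem stmt14 {V : Type} [Fintype V] (G : SimpleGraph V) (U W : Set V)
    (hdisj : Disjoint U W)
    (hbip : ∀ ⦃a b : V⦄, G.Adj a b → (a ∈ U ∧ b ∈ W) ∨ (a ∈ W ∧ b ∈ U))
    (VC' : Set V) (hVC' : IsMinVC G VC') (X : Set V) (hX : X ⊆ VC')
    (VC'' : Set V) (hVC'' : IsMinVC (delVerts G X) VC'') :
    IsMinVC G (VC'' ∪ X) := by
  obtain ⟨hcov'', hmin''⟩ := hVC''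
  obtain ⟨hcov', hmin'⟩ := hVC'
  constructor
  · intro u v huv
    by_cases hu : u ∈ X
    · exact Or.inl (Or.inr hu)
    by_cases hv : v ∈ X
    · exact Or.inr (Or.inr hv)
    have : (delVerts G X).Adj u v := ⟨huv.ne, Or.inl ⟨huv, hu, hv⟩⟩
    rcases hcov'' this with h | h
    · exact Or.inl (Or.inl h)
    · exact Or.inr (Or.inl h)
  · intro D hD
    -- VC' \ X covers delVerts G X
    have hdiff : IsVC (delVerts G X) (VC' \ X) := by
      intro u v huv
      obtain ⟨hne, h⟩ := huv
      rcases h with ⟨hadj, hu, hv⟩ | ⟨hadj, hv, hu⟩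
      · rcases hcov' hadj with h | h
        · exact Or.inl ⟨h, hu⟩
        · exact Or.inr ⟨h, hv⟩
      · rcases hcov' hadj.symm with h | h
        · exact Or.inl ⟨h, hu⟩
        · exact Or.inr ⟨h, hv⟩
    have h1 : VC''.ncard ≤ (VC' \ X).ncard := hmin'' _ hdiff
    have hfin : VC'.Finite := Set.toFinite _
    have h2 : (VC' \ X).ncard = VC'.ncard - X.ncard := Set.ncard_diff hX (Set.toFinite X)
    have h3 : X.ncard ≤ VC'.ncard := Set.ncard_le_ncard hX hfin
    calc (VC'' ∪ X).ncard ≤ VC''.ncard + X.ncard :=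
          Set.ncard_union_le _ _
      _ ≤ (VC' \ X).ncard + X.ncard := by omega
      _ = VC'.ncard := by rw [h2]; omega
      _ ≤ D.ncard := hmin' _ hD
end

section
/- Let G = (U,V,E) be a finite bipartite graph and let X ⊆ V be such that some minimum vertex cover of G contains X. Let Y ⊆ V. Then G \ Y has a minimum vertex cover containing X \ Y. -/
lemma delVerts_adj {V : Type} (G : SimpleGraph V) (Y : Set V) {u v : V} :
    (delVerts G Y).Adj u v ↔ G.Adj u v ∧ u ∉ Y ∧ v ∉ Y := by
  simp only [delVerts, SimpleGraph.fromRel_adj]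
  constructor
  · rintro ⟨hne, ⟨h, hu, hv⟩ | ⟨h, hv, hu⟩⟩
    · exact ⟨h, hu, hv⟩
    · exact ⟨h.symm, hu, hv⟩
  · rintro ⟨h, hu, hv⟩
    exact ⟨h.ne, Or.inl ⟨h, hu, hv⟩⟩

/-- Let `G` be a finite bipartite graph with parts `U` and `W`, and let
`X ⊆ W` be contained in some minimum vertex cover of `G`. Let `Y ⊆ W`.
Then `G \ Y` has a minimum vertex cover containing `X \ Y`. -/
theorem stmt15 {V : Type} [Fintype V] (G : SimpleGraph V) (U W : Set V)
    (hdisj : Disjoint U W)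
    (hbip : ∀ ⦃a b : V⦄, G.Adj a b → (a ∈ U ∧ b ∈ W) ∨ (a ∈ W ∧ b ∈ U))
    (X : Set V) (hX : X ⊆ W)
    (hcov : ∃ C : Set V, IsMinVC G C ∧ X ⊆ C)
    (Y : Set V) (hY : Y ⊆ W) :
    ∃ C : Set V, IsMinVC (delVerts G Y) C ∧ X \ Y ⊆ C := by
  obtain ⟨C, ⟨hCvc, hCmin⟩, hXC⟩ := hcov
  set G' := delVerts G Y with hG'
  -- C ⊆ U ∪ W
  have hbip' : ∀ ⦃a b : V⦄, G.Adj a b → a ∈ U ∪ W ∧ b ∈ U ∪ W := by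
    intro a b h
    rcases hbip h with ⟨ha, hb⟩ | ⟨ha, hb⟩
    · exact ⟨Or.inl ha, Or.inr hb⟩
    · exact ⟨Or.inr ha, Or.inl hb⟩
  have hCsub : C ⊆ U ∪ W := by
    have hvc : IsVC G (C ∩ (U ∪ W)) := by
      intro u v h
      obtain ⟨hu, hv⟩ := hbip' h
      rcases hCvc h with hc | hc
      · exact Or.inl ⟨hc, hu⟩
      · exact Or.inr ⟨hc, hv⟩
    have hle := hCmin _ hvc
    have heq := Set.eq_of_subset_of_ncard_le Set.inter_subset_left hle (Set.toFinite _)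
    rw [← heq]; exact Set.inter_subset_right
  -- a minimum vertex cover D of G'
  have hSne : {n | ∃ D : Set V, IsVC G' D ∧ D.ncard = n}.Nonempty :=
    ⟨(Set.univ : Set V).ncard, Set.univ, fun u v _ => Or.inl (Set.mem_univ u), rfl⟩
  obtain ⟨D, hDvc, hDn⟩ := Nat.sInf_mem hSne
  have hDmin : ∀ E : Set V, IsVC G' E → D.ncard ≤ E.ncard := by
    intro E hE
    rw [hDn]
    exact Nat.sInf_le ⟨E, hE, rfl⟩
  -- shrink D to D₁ ⊆ (U ∪ W) \ Y
  set D₁ := D ∩ ((U ∪ W) \ Y) with hD₁def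
  have hD₁vc : IsVC G' D₁ := by
    intro u v h
    obtain ⟨hg, huY, hvY⟩ := (delVerts_adj G Y).mp h
    obtain ⟨hu, hv⟩ := hbip' hg
    rcases hDvc h with hc | hc
    · exact Or.inl ⟨hc, hu, huY⟩
    · exact Or.inr ⟨hc, hv, hvY⟩
  have hD₁min : ∀ E : Set V, IsVC G' E → D₁.ncard ≤ E.ncard := by
    intro E hE
    exact le_trans (Set.ncard_le_ncard Set.inter_subset_left (Set.toFinite _)) (hDmin E hE)
  have hD₁sub : D₁ ⊆ U ∪ W := fun x hx => hx.2.1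
  have hD₁Y : ∀ x ∈ D₁, x ∉ Y := fun x hx => hx.2.2
  -- A := C \ Y is a vertex cover of G'
  set A := C \ Y with hAdef
  have hAvc : IsVC G' A := by
    intro u v h
    obtain ⟨hg, huY, hvY⟩ := (delVerts_adj G Y).mp h
    rcases hCvc hg with hc | hc
    · exact Or.inl ⟨hc, huY⟩
    · exact Or.inr ⟨hc, hvY⟩
  have hAsub : A ⊆ U ∪ W := fun x hx => hCsub hx.1
  -- the two lattice combinations
  set F := (A ∩ D₁ ∩ U) ∪ ((A ∪ D₁) ∩ W) with hFdef
  set F' := ((A ∪ D₁) ∩ U) ∪ (A ∩ D₁ ∩ W) with hF'def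
  -- F is a vertex cover of G'
  have hFvc : IsVC G' F := by
    intro u v h
    obtain ⟨hg, huY, hvY⟩ := (delVerts_adj G Y).mp h
    have hA := hAvc h
    have hD := hD₁vc h
    rcases hbip hg with ⟨hu, hv⟩ | ⟨hu, hv⟩
    · by_cases huA : u ∈ A
      · by_cases huD : u ∈ D₁
        · exact Or.inl (Or.inl ⟨⟨huA, huD⟩, hu⟩)
        · exact Or.inr (Or.inr ⟨Or.inr (hD.resolve_left huD), hv⟩)
      · exact Or.inr (Or.inr ⟨Or.inl (hA.resolve_left huA), hv⟩)
    · by_cases hvA : v ∈ A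
      · by_cases hvD : v ∈ D₁
        · exact Or.inr (Or.inl ⟨⟨hvA, hvD⟩, hv⟩)
        · exact Or.inl (Or.inr ⟨Or.inr (hD.resolve_right hvD), hu⟩)
      · exact Or.inl (Or.inr ⟨Or.inl (hA.resolve_right hvA), hu⟩)
  -- F' ∪ (C ∩ Y) is a vertex cover of G
  have hF'vc : IsVC G (F' ∪ (C ∩ Y)) := by
    have memU : ∀ {x}, x ∈ A ∪ D₁ → x ∈ U → x ∈ F' ∪ (C ∩ Y) := fun hx hxU =>
      Set.mem_union_left _ (Set.mem_union_left _ ⟨hx, hxU⟩)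
    have memW : ∀ {x}, x ∈ A → x ∈ D₁ → x ∈ W → x ∈ F' ∪ (C ∩ Y) := fun h1 h2 hxW =>
      Set.mem_union_left _ (Set.mem_union_right _ ⟨⟨h1, h2⟩, hxW⟩)
    have memC : ∀ {x}, x ∈ C → x ∈ Y → x ∈ F' ∪ (C ∩ Y) := fun h1 h2 =>
      Set.mem_union_right _ ⟨h1, h2⟩
    intro u v h
    rcases hbip h with ⟨hu, hv⟩ | ⟨hu, hv⟩
    · have huY : u ∉ Y := fun hc => hdisj.ne_of_mem hu (hY hc) rfl
      by_cases hvY : v ∈ Y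
      · rcases hCvc h with hc | hc
        · exact Or.inl (memU (Set.mem_union_left _ ⟨hc, huY⟩) hu)
        · exact Or.inr (memC hc hvY)
      · have h' : G'.Adj u v := (delVerts_adj G Y).mpr ⟨h, huY, hvY⟩
        have hA := hAvc h'
        have hD := hD₁vc h'
        by_cases hvA : v ∈ A
        · by_cases hvD : v ∈ D₁
          · exact Or.inr (memW hvA hvD hv)
          · exact Or.inl (memU (Set.mem_union_right _ (hD.resolve_right hvD)) hu)
        · exact Or.inl (memU (Set.mem_union_left _ (hA.resolve_right hvA)) hu)
    · have hvY : v ∉ Y := fun hc => hdisj.ne_of_mem hv (hY hc) rfl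
      by_cases huY : u ∈ Y
      · rcases hCvc h with hc | hc
        · exact Or.inl (memC hc huY)
        · exact Or.inr (memU (Set.mem_union_left _ ⟨hc, hvY⟩) hv)
      · have h' : G'.Adj u v := (delVerts_adj G Y).mpr ⟨h, huY, hvY⟩
        have hA := hAvc h'
        have hD := hD₁vc h'
        by_cases huA : u ∈ A
        · by_cases huD : u ∈ D₁
          · exact Or.inl (memW huA huD hu)
          · exact Or.inr (memU (Set.mem_union_right _ (hD.resolve_left huD)) hv)
        · exact Or.inr (memU (Set.mem_union_left _ (hA.resolve_left huA)) hv)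
  -- cardinality bookkeeping
  have hsplit : ∀ S : Set V, S ⊆ U ∪ W → S.ncard = (S ∩ U).ncard + (S ∩ W).ncard := by
    intro S hS
    rw [← Set.ncard_union_eq (hdisj.mono Set.inter_subset_right Set.inter_subset_right)
      (Set.toFinite _) (Set.toFinite _)]
    congr 1
    rw [← Set.inter_union_distrib_left]
    exact (Set.inter_eq_left.mpr hS).symm
  have hFcard : F.ncard = (A ∩ D₁ ∩ U).ncard + ((A ∪ D₁) ∩ W).ncard := by
    apply Set.ncard_union_eq _ (Set.toFinite _) (Set.toFinite _)
    exact hdisj.mono Set.inter_subset_right Set.inter_subset_right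
  have hF'card : F'.ncard = ((A ∪ D₁) ∩ U).ncard + (A ∩ D₁ ∩ W).ncard := by
    apply Set.ncard_union_eq _ (Set.toFinite _) (Set.toFinite _)
    exact hdisj.mono Set.inter_subset_right Set.inter_subset_right
  have hIEU : (A ∩ D₁ ∩ U).ncard + ((A ∪ D₁) ∩ U).ncard = (A ∩ U).ncard + (D₁ ∩ U).ncard := by
    have h1 : A ∩ D₁ ∩ U = (A ∩ U) ∩ (D₁ ∩ U) := by ext x; simp; tauto
    have h2 : (A ∪ D₁) ∩ U = (A ∩ U) ∪ (D₁ ∩ U) := by ext x; simp; tauto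
    rw [h1, h2]
    exact Set.ncard_inter_add_ncard_union _ _ (Set.toFinite _) (Set.toFinite _)
  have hIEW : (A ∩ D₁ ∩ W).ncard + ((A ∪ D₁) ∩ W).ncard = (A ∩ W).ncard + (D₁ ∩ W).ncard := by
    have h1 : A ∩ D₁ ∩ W = (A ∩ W) ∩ (D₁ ∩ W) := by ext x; simp; tauto
    have h2 : (A ∪ D₁) ∩ W = (A ∩ W) ∪ (D₁ ∩ W) := by ext x; simp; tauto
    rw [h1, h2]
    exact Set.ncard_inter_add_ncard_union _ _ (Set.toFinite _) (Set.toFinite _)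
  have hsum : F.ncard + F'.ncard = A.ncard + D₁.ncard := by
    rw [hFcard, hF'card, hsplit A hAsub, hsplit D₁ hD₁sub]
    omega
  -- |C| = |A| + |C ∩ Y|
  have hCsplit : C.ncard = A.ncard + (C ∩ Y).ncard := by
    rw [← Set.ncard_union_eq Set.disjoint_sdiff_inter (Set.toFinite _) (Set.toFinite _),
      Set.diff_union_inter]
  -- |C| ≤ |F'| + |C ∩ Y|
  have hClb : C.ncard ≤ F'.ncard + (C ∩ Y).ncard :=
    le_trans (hCmin _ hF'vc) (Set.ncard_union_le _ _)
  have hFle : F.ncard ≤ D₁.ncard := by omega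
  refine ⟨F, ⟨hFvc, fun E hE => le_trans hFle (hD₁min E hE)⟩, ?_⟩
  intro x hx
  exact Or.inr ⟨Or.inl ⟨hXC hx.1, hx.2⟩, hX hx.1⟩
end

section
/- Let G be a finite graph with n vertices, let (P, B) be a path decomposition of G with nodes x₁, …, x_m listed in path order, and for each u ∈ V(G) let f(u) be the smallest index i with u ∈ B(x_i). Let SV = (v₁, …, v_n) be a permutation of V(G) such that u precedes v in SV whenever f(u) < f(v). Then for each 1 ≤ i < n, the bag B(x_{f(v_i)}) is a vertex cover of G_i. -/
/-- `V_i`: the set of the first `i` vertices in the ordering `σ`. -/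
def prefixSet {V : Type} {n : ℕ} (σ : Fin n ≃ V) (i : ℕ) : Set V :=
  {v : V | ((σ.symm v : Fin n) : ℕ) < i}

/-- The graph `G_i`: same vertices as `G`, its edges being exactly the edges
of `G` with one end in `V_i` and the other end in `¬V_i = V(G) \ V_i`. -/
def cutGraph {V : Type} {n : ℕ} (G : SimpleGraph V) (σ : Fin n ≃ V) (i : ℕ) :
    SimpleGraph V :=
  SimpleGraph.fromRel (fun u v => G.Adj u v ∧ u ∈ prefixSet σ i ∧ v ∉ prefixSet σ i)

/-- Let `G` be a finite graph with `n` vertices, let `B : Fin m → Set V` be a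
path decomposition of `G` (bags listed in path order), for each vertex `x` let
`f x` be the smallest index `i` with `x ∈ B i`, and let `σ` be an ordering of
the vertices such that `u` precedes `w` whenever `f u < f w`. Then for each
`1 ≤ i < n`, the bag `B (f vᵢ)` is a vertex cover of `Gᵢ`, where `vᵢ` is the
`i`-th vertex of the ordering. -/
theorem stmt17 {V : Type} [Fintype V] (G : SimpleGraph V)
    (n : ℕ) (hn : Fintype.card V = n) (σ : Fin n ≃ V)
    (m : ℕ) (B : Fin m → Set V)
    (hunion : ∀ x : V, ∃ i, x ∈ B i)
    (hedge : ∀ x y : V, G.Adj x y → ∃ i, x ∈ B i ∧ y ∈ B i)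
    (hconn : ∀ (x : V) (i j k : Fin m), i ≤ j → j ≤ k → x ∈ B i → x ∈ B k → x ∈ B j)
    (f : V → Fin m)
    (hf1 : ∀ x : V, x ∈ B (f x))
    (hf2 : ∀ (x : V) (i : Fin m), x ∈ B i → f x ≤ i)
    (hσ : ∀ j j' : Fin n, f (σ j) < f (σ j') → j < j')
    (i : ℕ) (hi1 : 1 ≤ i) (hi2 : i < n) :
    IsVC (cutGraph G σ i) (B (f (σ ⟨i - 1, by omega⟩))) := by
  set v : V := σ ⟨i - 1, by omega⟩ with hv
  have key : ∀ u w : V, G.Adj u w → u ∈ prefixSet σ i → w ∉ prefixSet σ i →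
      u ∈ B (f v) := by
    intro u w hadj hu hw
    have hfu : f u ≤ f v := by
      by_contra h
      have := hσ (σ.symm v) (σ.symm u) (by simpa using lt_of_not_ge h)
      rw [Fin.lt_def] at this
      have hu' : ((σ.symm u : Fin n) : ℕ) < i := hu
      simp only [hv, Equiv.symm_apply_apply] at this
      omega
    have hfv : f v ≤ f w := by
      by_contra h
      have := hσ (σ.symm w) (σ.symm v) (by simpa using lt_of_not_ge h)
      rw [Fin.lt_def] at this
      have hw' : ¬ ((σ.symm w : Fin n) : ℕ) < i := hw
      simp only [hv, Equiv.symm_apply_apply] at this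
      omega
    obtain ⟨k, huk, hwk⟩ := hedge u w hadj
    have hk : f v ≤ k := le_trans hfv (hf2 w k hwk)
    exact hconn u (f u) (f v) k hfu hk (hf1 u) huk
  intro u w h
  rw [cutGraph, SimpleGraph.fromRel_adj] at h
  obtain ⟨-, h | h⟩ := h
  · exact Or.inl (key u w h.1 h.2.1 h.2.2)
  · exact Or.inr (key w u h.1 h.2.1 h.2.2)
end
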